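/- arXiv:0801.3893 — 14 statements merged into one kernel-verified Lean document; each statement's English description precedes it below -/
import Mathlib

section
/- Let n and m be distinct positive integers such that the ratio m/n is not of the form p^e for any prime p and any nonzero integer e. Then the cyclotomic polynomials Φ_n(q) and Φ_m(q) generate the unit ideal of ℤ[q]; equivalently, Φ_n and Φ_m are coprime (IsCoprime) in the polynomial ring ℤ[q]. -/
/-!
Since `Φ_n` and `Φ_m` are monic, they are coprime over `ℤ` iff their resultant is `±1`, that is,
iff it is nonzero modulo every prime `p`, that is, iff they stay coprime over `𝔽_p`. In
characteristic `p`, `Φ_(p^k a)` is a power of `Φ_a` when `p ∤ a`, and two distinct `Φ_a`, `Φ_b`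
with `p ∤ ab` both divide the separable polynomial `X^(ab) - 1`, hence are coprime. So it suffices
that the `p`-free parts of `n` and `m` differ for every `p`; if they agree for some `p`, then
`m / n` is a power of `p`.
-/

open Polynomial

theorem Int.isUnit_of_forall_isUnit_cast_zmod {r : ℤ}
    (h : ∀ p : ℕ, p.Prime → IsUnit (r : ZMod p)) : IsUnit r := by
  by_contra hr
  obtain ⟨p, hp, hpr⟩ := Nat.exists_prime_and_dvd (mt Int.isUnit_iff_natAbs_eq.2 hr)
  have : Fact p.Prime := ⟨hp⟩
  exact (h p hp).ne_zero <| (ZMod.intCast_zmod_eq_zero_iff_dvd r p).2 (Int.natCast_dvd.2 hpr)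

theorem Polynomial.Monic.isCoprime_of_forall_isCoprime_map_zmod {f g : ℤ[X]} (hf : f.Monic)
    (hg : g.Monic) (h : ∀ p : ℕ, p.Prime →
      IsCoprime (f.map (Int.castRingHom (ZMod p))) (g.map (Int.castRingHom (ZMod p)))) :
    IsCoprime f g := by
  rw [← isUnit_resultant_iff_isCoprime hf]
  refine Int.isUnit_of_forall_isUnit_cast_zmod fun p hp => ?_
  have : Fact p.Prime := ⟨hp⟩
  have := (isUnit_resultant_iff_isCoprime (hf.map (Int.castRingHom (ZMod p)))).2 (h p hp)
  rwa [hf.natDegree_map, hg.natDegree_map, resultant_map_map, eq_intCast] at this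

theorem Polynomial.isCoprime_cyclotomic_of_ne {K : Type*} [Field K] {n m : ℕ} (hn : (n : K) ≠ 0)
    (hm : (m : K) ≠ 0) (hnm : n ≠ m) : IsCoprime (cyclotomic n K) (cyclotomic m K) := by
  have hnm0 : n * m ≠ 0 :=
    mul_ne_zero (ne_of_apply_ne (Nat.cast : ℕ → K) (by rwa [Nat.cast_zero]))
      (ne_of_apply_ne (Nat.cast : ℕ → K) (by rwa [Nat.cast_zero]))
  have hdvd : cyclotomic n K * cyclotomic m K ∣ X ^ (n * m) - 1 := by
    rw [← prod_cyclotomic_eq_X_pow_sub_one (Nat.pos_of_ne_zero hnm0), ← Finset.prod_pair (f := (cyclotomic · K)) hnm]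
    refine Finset.prod_dvd_prod_of_subset _ _ _ fun d hd => ?_
    rw [Finset.mem_insert, Finset.mem_singleton] at hd
    rcases hd with rfl | rfl
    · exact Nat.mem_divisors.2 ⟨dvd_mul_right _ _, hnm0⟩
    · exact Nat.mem_divisors.2 ⟨dvd_mul_left _ _, hnm0⟩
  have hsep : (X ^ (n * m) - 1 : K[X]).Separable := by
    rw [X_pow_sub_one_separable_iff, Nat.cast_mul]
    exact mul_ne_zero hn hm
  exact (hsep.of_dvd hdvd).isCoprime

theorem Polynomial.exists_cyclotomic_eq_cyclotomic_ordCompl_pow (K : Type*) [Ring K] (p : ℕ)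
    [Fact p.Prime] [CharP K p] (n : ℕ) :
    ∃ e : ℕ, cyclotomic n K = cyclotomic (ordCompl[p] n) K ^ e := by
  rcases Nat.eq_zero_or_pos (n.factorization p) with h0 | hpos
  · exact ⟨1, by rw [pow_one, h0, pow_zero, Nat.div_one]⟩
  · have hn : n ≠ 0 := by rintro rfl; simp at hpos
    have := cyclotomic_mul_prime_pow_eq K (Nat.not_dvd_ordCompl Fact.out hn) hpos
    rw [Nat.ordProj_mul_ordCompl_eq_self] at this
    exact ⟨_, this⟩

theorem Polynomial.isCoprime_cyclotomic_of_ordCompl_ne {K : Type*} [Field K] (p : ℕ)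
    [Fact p.Prime] [CharP K p] {n m : ℕ} (hn : n ≠ 0) (hm : m ≠ 0)
    (hnm : ordCompl[p] n ≠ ordCompl[p] m) : IsCoprime (cyclotomic n K) (cyclotomic m K) := by
  obtain ⟨e, he⟩ := exists_cyclotomic_eq_cyclotomic_ordCompl_pow K p n
  obtain ⟨f, hf⟩ := exists_cyclotomic_eq_cyclotomic_ordCompl_pow K p m
  rw [he, hf]
  refine IsCoprime.pow (isCoprime_cyclotomic_of_ne ?_ ?_ hnm) <;>
    rw [Ne, CharP.cast_eq_zero_iff K p]
  exacts [Nat.not_dvd_ordCompl Fact.out hn, Nat.not_dvd_ordCompl Fact.out hm]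

theorem Nat.cast_div_eq_zpow_of_ordCompl_eq {K : Type*} [Field K] [CharZero K] {p n m : ℕ}
    (hp : p.Prime) (hn : n ≠ 0) (h : ordCompl[p] n = ordCompl[p] m) :
    (m : K) / n = (p : K) ^ ((m.factorization p : ℤ) - n.factorization p) := by
  have hc : ((ordCompl[p] m : ℕ) : K) ≠ 0 := by
    rw [← h]; exact_mod_cast (Nat.ordCompl_pos p hn).ne'
  conv_lhs => rw [← Nat.ordProj_mul_ordCompl_eq_self m p, ← Nat.ordProj_mul_ordCompl_eq_self n p, h]
  rw [Nat.cast_mul, Nat.cast_mul, mul_div_mul_right _ _ hc, Nat.cast_pow, Nat.cast_pow,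
    zpow_sub₀ (by exact_mod_cast hp.ne_zero), zpow_natCast, zpow_natCast]

/-- If `n ≠ m` are positive integers and `m / n` is not of the form `p ^ e` for any prime `p`
and nonzero integer `e`, then the cyclotomic polynomials `Φ_n` and `Φ_m` are coprime in `ℤ[q]`. -/
theorem stmt0 (n m : ℕ) (hn : 0 < n) (hm : 0 < m) (hnm : n ≠ m)
    (h : ∀ p : ℕ, p.Prime → ∀ e : ℤ, e ≠ 0 → (m : ℚ) / (n : ℚ) ≠ (p : ℚ) ^ e) :
    IsCoprime (Polynomial.cyclotomic n ℤ) (Polynomial.cyclotomic m ℤ) := by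
  refine (cyclotomic.monic n ℤ).isCoprime_of_forall_isCoprime_map_zmod (cyclotomic.monic m ℤ)
    fun p hp => ?_
  have : Fact p.Prime := ⟨hp⟩
  rw [map_cyclotomic, map_cyclotomic]
  refine isCoprime_cyclotomic_of_ordCompl_ne p hn.ne' hm.ne' fun hpnm => ?_
  have hdiv := Nat.cast_div_eq_zpow_of_ordCompl_eq (K := ℚ) hp hn.ne' hpnm
  refine h p hp _ (fun he => hnm ?_) hdiv
  rw [he, zpow_zero, div_eq_one_iff_eq (by positivity)] at hdiv
  exact_mod_cast hdiv.symm
end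

section
/- Let p be a prime, let n be a positive integer and let e be a nonzero integer such that m := n·p^e is a positive integer. Then the cyclotomic polynomials Φ_n(q) and Φ_m(q) generate the unit ideal of ℤ[1/p][q]; equivalently, Φ_n and Φ_m are coprime (IsCoprime) in the polynomial ring ℤ[1/p][q]. -/
/-!
A common factor of `Φ_n` and `Φ_{n d}` over a ring in which `d` is a unit would survive in some
residue field `K` of `R[X]` as a common root `μ`. Write `n = ℓ^k n'` with `ℓ ∤ n'`, where `ℓ` is
the characteristic of `K` (`k = 0` in characteristic zero); the roots of `Φ_{ℓ^k N}` are the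
primitive `N`-th roots of unity whenever `N ≠ 0` in `K`. Since `d` is invertible in `K`, this
applies to `N = n'` and `N = n' d`, so `μ` would have order both `n'` and `n' d`, forcing `d = 1`.
With `d = p^|e|` this gives the theorem.
-/

open Polynomial

universe u

theorem Polynomial.isCoprime_of_forall_isRoot_map {R : Type u} [CommRing R] {f g : R[X]}
    (h : ∀ (K : Type u) [Field K] (φ : R →+* K) (x : K),
      (f.map φ).IsRoot x → ¬ (g.map φ).IsRoot x) :
    IsCoprime f g := by
  rw [← Ideal.isCoprime_span_singleton_iff, Ideal.isCoprime_iff_sup_eq]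
  by_contra hne
  obtain ⟨M, hM, hle⟩ := Ideal.exists_le_maximal _ hne
  have hroot : ∀ q ∈ M,
      (q.map ((Ideal.Quotient.mk M).comp C)).IsRoot (Ideal.Quotient.mk M X) := by
    intro q hq
    rw [IsRoot.def, eval_map, ← hom_eval₂, eval₂_C_X]
    exact Ideal.Quotient.eq_zero_iff_mem.mpr hq
  let := Ideal.Quotient.field M
  exact h _ ((Ideal.Quotient.mk M).comp C) (Ideal.Quotient.mk M X)
    (hroot f (hle (Ideal.mem_sup_left (Ideal.mem_span_singleton_self f))))
    (hroot g (hle (Ideal.mem_sup_right (Ideal.mem_span_singleton_self g))))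

/-- `c` is the largest power of the characteristic dividing `n` (`c = 1` in characteristic zero). -/
theorem Polynomial.exists_isRoot_cyclotomic_mul_iff (K : Type*) [CommRing K] [IsDomain K]
    {n : ℕ} (hn : n ≠ 0) :
    ∃ c n', n = c * n' ∧ (n' : K) ≠ 0 ∧ ∀ {N : ℕ} {μ : K}, (N : K) ≠ 0 →
      ((cyclotomic (c * N) K).IsRoot μ ↔ IsPrimitiveRoot μ N) := by
  obtain _ | ⟨ℓ, hℓ, _⟩ := CharP.exists' K
  · refine ⟨1, n, (one_mul n).symm, Nat.cast_ne_zero.mpr hn, fun hN => ?_⟩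
    have := NeZero.mk hN
    rw [one_mul, isRoot_cyclotomic_iff]
  · refine ⟨ℓ ^ n.factorization ℓ, n / ℓ ^ n.factorization ℓ,
      (Nat.ordProj_mul_ordCompl_eq_self n ℓ).symm, ?_, fun hN => ?_⟩
    · rw [Ne, CharP.cast_eq_zero_iff K ℓ]
      exact Nat.not_dvd_ordCompl hℓ.out hn
    · have := NeZero.mk hN
      exact isRoot_cyclotomic_prime_pow_mul_iff_of_charP

theorem Polynomial.not_isRoot_cyclotomic_mul_of_isRoot {K : Type*} [CommRing K] [IsDomain K]
    {n d : ℕ} (hd : d ≠ 1) (hdK : (d : K) ≠ 0) {μ : K} (hμ : (cyclotomic n K).IsRoot μ) :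
    ¬ (cyclotomic (n * d) K).IsRoot μ := by
  rcases eq_or_ne n 0 with rfl | hn
  · simp at hμ
  obtain ⟨c, n', rfl, hn'K, hroot⟩ := exists_isRoot_cyclotomic_mul_iff K hn
  rw [mul_assoc, hroot (by push_cast; exact mul_ne_zero hn'K hdK)]
  rw [hroot hn'K] at hμ
  intro hμd
  have hn' : n' ≠ 0 := by rintro rfl; simp at hn'K
  exact hd ((Nat.mul_eq_left hn').mp (hμ.unique hμd).symm)

theorem Polynomial.isCoprime_cyclotomic_mul {R : Type*} [CommRing R] {n d : ℕ} (hd : d ≠ 1)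
    (hdR : IsUnit (d : R)) : IsCoprime (cyclotomic n R) (cyclotomic (n * d) R) :=
  isCoprime_of_forall_isRoot_map fun K _ φ x => by
    rw [map_cyclotomic, map_cyclotomic]
    exact not_isRoot_cyclotomic_mul_of_isRoot hd (by simpa using (hdR.map φ).ne_zero)

theorem stmt1_general (p : ℕ) (hp : p.Prime) (n : ℕ) (e : ℤ) (he : e ≠ 0)
    (m : ℕ) (hme : (m : ℚ) = (n : ℚ) * (p : ℚ) ^ e) :
    IsCoprime (Polynomial.cyclotomic n (Localization.Away (p : ℤ)))
      (Polynomial.cyclotomic m (Localization.Away (p : ℤ))) := by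
  obtain ⟨a, rfl | rfl⟩ := Int.eq_nat_or_neg e
  all_goals
    have hpa : p ^ a ≠ 1 := (Nat.one_lt_pow (by simpa using he) hp.one_lt).ne'
    have hunit : IsUnit ((p ^ a : ℕ) : Localization.Away (p : ℤ)) := by
      simpa using
        (IsLocalization.Away.algebraMap_isUnit (S := Localization.Away (p : ℤ)) (p : ℤ)).pow a
  · obtain rfl : m = n * p ^ a := by exact_mod_cast hme
    exact isCoprime_cyclotomic_mul hpa hunit
  · obtain rfl : n = m * p ^ a := by
      have hp0 : (p : ℚ) ≠ 0 := by exact_mod_cast hp.ne_zero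
      rw [zpow_neg, zpow_natCast] at hme
      exact_mod_cast (by field_simp at hme; linarith : (n : ℚ) = m * p ^ a)
    exact (isCoprime_cyclotomic_mul hpa hunit).symm

/-- If `p` is a prime, `n` a positive integer and `e` a nonzero integer such that
`m = n * p ^ e` is a positive integer, then the cyclotomic polynomials `Φ_n` and `Φ_m`
are coprime in `ℤ[1/p][q]`. -/
theorem stmt1 (p : ℕ) (hp : p.Prime) (n : ℕ) (hn : 0 < n) (e : ℤ) (he : e ≠ 0)
    (m : ℕ) (hm : 0 < m) (hme : (m : ℚ) = (n : ℚ) * (p : ℚ) ^ e) :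
    IsCoprime (Polynomial.cyclotomic n (Localization.Away (p : ℤ)))
      (Polynomial.cyclotomic m (Localization.Away (p : ℤ))) :=
  stmt1_general p hp n e he m hme
end

section
/- Let p be a prime, let n_1, …, n_m be positive integers whose p-adic valuations are pairwise distinct, and let k_1, …, k_m be positive integers. Then the natural ring homomorphism ℤ[1/p][q]/(∏_{i=1}^m Φ_{n_i}(q)^{k_i}) → ∏_{i=1}^m ℤ[1/p][q]/(Φ_{n_i}(q)^{k_i}) induced by the quotient maps is a ring isomorphism. -/
/-!
Once `p` is invertible, cyclotomic polynomials whose indices have different `p`-adic valuations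
are coprime, so the map is the Chinese remainder isomorphism. For coprimality let
`v_p(a) < v_p(b)` and let `x` satisfy `x ^ a = 1` and `Φ_b(x) = 0`. Then also `x ^ b = 1`, hence
`x ^ gcd(a, b) = 1`, and `gcd(a, b)` divides `b / p`. As `Φ_b` divides
`1 + X ^ (b / p) + ⋯ + X ^ ((p - 1) * (b / p))`, evaluating at `x` gives `p = 0`.
-/

open Polynomial

instance (a : ℤ) (I : Ideal (Localization.Away a)[X]) : I.IsTwoSided :=
  ⟨fun b ha => mul_comm b _ ▸ I.mul_mem_left b ha⟩

theorem Nat.gcd_dvd_div_of_padicValNat_lt {p a b : ℕ} [Fact p.Prime] (ha : a ≠ 0)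
    (hab : padicValNat p a < padicValNat p b) : Nat.gcd a b ∣ b / p := by
  obtain ⟨c, hc⟩ := Nat.gcd_dvd_right a b
  have hg : Nat.gcd a b ≠ 0 := Nat.gcd_ne_zero_left ha
  have hc0 : c ≠ 0 := by rintro rfl; rw [mul_zero] at hc; simp [hc] at hab
  have hpc : p ∣ c := by
    by_contra hpc
    have hga : padicValNat p (Nat.gcd a b) ≤ padicValNat p a :=
      (padicValNat_dvd_iff_le ha).mp (pow_padicValNat_dvd.trans (Nat.gcd_dvd_left a b))
    rw [hc, padicValNat.mul hg hc0, padicValNat.eq_zero_of_not_dvd hpc] at hab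
    omega
  have hbp : b / p = Nat.gcd a b * (c / p) := by rw [← Nat.mul_div_assoc _ hpc, ← hc]
  exact hbp ▸ Nat.dvd_mul_right _ _

theorem cyclotomic_dvd_geom_sum_X_pow (R : Type*) [CommRing R] {d n : ℕ}
    (h : d ∈ n.properDivisors) : cyclotomic n R ∣ ∑ j ∈ Finset.range (n / d), (X ^ d) ^ j := by
  obtain ⟨⟨e, rfl⟩, -⟩ := Nat.mem_properDivisors.mp h
  have hd : d ≠ 0 := by rintro rfl; simp at h
  obtain ⟨c, hc⟩ := X_pow_sub_one_mul_cyclotomic_dvd_X_pow_sub_one_of_dvd R h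
  refine ⟨c, (monic_X_pow_sub_C (1 : R) hd).isRegular.left ?_⟩
  simp only [C_1, mul_comm (X ^ d - 1 : R[X]), geom_sum_mul]
  rw [← pow_mul, Nat.mul_div_cancel_left _ (Nat.pos_of_ne_zero hd), hc]
  ring

theorem natCast_eq_zero_of_aeval_cyclotomic_eq_zero {R S : Type*} [CommRing R] [CommRing S]
    [Algebra R S] {p a b : ℕ} [Fact p.Prime] (ha : a ≠ 0)
    (hab : padicValNat p a < padicValNat p b) {x : S} (hxa : x ^ a = 1)
    (hΦ : aeval x (cyclotomic b R) = 0) : (p : S) = 0 := by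
  have hpb : p ∣ b := dvd_of_one_le_padicValNat (by omega)
  have hb : b ≠ 0 := by rintro rfl; simp at hab
  have hxb : x ^ b = 1 := by
    obtain ⟨c, hc⟩ := cyclotomic.dvd_X_pow_sub_one b R
    simpa [hΦ, sub_eq_zero] using congrArg (aeval x) hc
  have hxd : x ^ (b / p) = 1 := by
    obtain ⟨e, he⟩ := Nat.gcd_dvd_div_of_padicValNat_lt ha hab
    rw [he, pow_mul, pow_gcd_eq_one.mpr ⟨hxa, hxb⟩, one_pow]
  have hdb : b / p ∈ b.properDivisors :=
    Nat.mem_properDivisors.mpr ⟨Nat.div_dvd_of_dvd hpb,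
      Nat.div_lt_self (Nat.pos_of_ne_zero hb) (Fact.out : p.Prime).one_lt⟩
  obtain ⟨c, hc⟩ := cyclotomic_dvd_geom_sum_X_pow R hdb
  -- evaluated at `x`, the geometric sum `∑_{j < p} X^{(b/p) j}` becomes `p`
  simpa [Nat.div_div_self hpb hb, hxd, hΦ] using congrArg (aeval x) hc

theorem isCoprime_X_pow_sub_one_cyclotomic {R : Type*} [CommRing R] {p a b : ℕ} [Fact p.Prime]
    (hp : IsUnit (p : R)) (ha : a ≠ 0) (hab : padicValNat p a < padicValNat p b) :
    IsCoprime (X ^ a - 1 : R[X]) (cyclotomic b R) := by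
  set I := Ideal.span {(X ^ a - 1 : R[X]), cyclotomic b R}
  have hmk : ∀ f : R[X], Ideal.Quotient.mk I f = aeval (Ideal.Quotient.mk I X) f := fun f => by
    rw [← Ideal.Quotient.mkₐ_eq_mk R, aeval_algHom_apply, aeval_X_left_apply]
  have hxa : Ideal.Quotient.mk I X ^ a = 1 := by
    rw [← map_pow, ← sub_eq_zero, ← map_one (Ideal.Quotient.mk I), ← map_sub,
      Ideal.Quotient.eq_zero_iff_mem]
    exact Ideal.subset_span (by simp)
  have hΦ : aeval (Ideal.Quotient.mk I X) (cyclotomic b R) = 0 := by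
    rw [← hmk, Ideal.Quotient.eq_zero_iff_mem]
    exact Ideal.subset_span (by simp)
  have hpI : (p : R[X]) ∈ I := by
    rw [← Ideal.Quotient.eq_zero_iff_mem, map_natCast]
    exact natCast_eq_zero_of_aeval_cyclotomic_eq_zero ha hab hxa hΦ
  have hI : I = ⊤ := Ideal.eq_top_of_isUnit_mem I hpI (by simpa using hp.map C)
  exact Ideal.mem_span_pair.mp ((Ideal.eq_top_iff_one I).mp hI)

theorem isCoprime_cyclotomic_of_padicValNat_ne {R : Type*} [CommRing R] {p a b : ℕ}
    [Fact p.Prime] (hp : IsUnit (p : R)) (hab : padicValNat p a ≠ padicValNat p b) :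
    IsCoprime (cyclotomic a R) (cyclotomic b R) := by
  wlog hlt : padicValNat p a < padicValNat p b generalizing a b
  · exact (this hab.symm (hab.lt_or_gt.resolve_left hlt)).symm
  rcases eq_or_ne a 0 with rfl | ha
  · simpa using isCoprime_one_left
  exact (isCoprime_X_pow_sub_one_cyclotomic hp ha hlt).of_isCoprime_of_dvd_left
    (cyclotomic.dvd_X_pow_sub_one a R)

namespace Ideal.Quotient

theorem pi_factor_span_prod_bijective {R ι : Type*} [CommRing R] [Fintype ι]
    (f : ι → R) (hf : Pairwise fun i j => IsCoprime (f i) (f j)) :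
    Function.Bijective <| RingHom.pi fun i => factor <|
      span_singleton_le_span_singleton.mpr <| Finset.dvd_prod_of_mem f (Finset.mem_univ i) := by
  have heq : span {∏ i, f i} = ⨅ i, span {f i} := (iInf_span_singleton hf).symm
  have hCRT : Function.Bijective (quotientInfToPiQuotient fun i => span {f i}) :=
    ⟨quotientInfToPiQuotient_inj _, quotientInfToPiQuotient_surj fun i j hij =>
      (isCoprime_span_singleton_iff (f i) (f j)).mpr (hf hij)⟩
  convert hCRT.comp (quotEquivOfEq heq).bijective using 1
  ext y
  obtain ⟨z, rfl⟩ := mk_surjective y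
  rfl

end Ideal.Quotient

theorem stmt2_general (p : ℕ) (hp : p.Prime) (m : ℕ) (n : Fin m → ℕ) (k : Fin m → ℕ)
    (hval : ∀ i j, i ≠ j → padicValNat p (n i) ≠ padicValNat p (n j)) :
    Function.Bijective
      (Pi.ringHom fun i : Fin m =>
        Ideal.Quotient.factor (R := (Localization.Away (p : ℤ))[X])
          (S := Ideal.span {∏ j : Fin m, cyclotomic (n j) (Localization.Away (p : ℤ)) ^ k j})
          (T := Ideal.span {cyclotomic (n i) (Localization.Away (p : ℤ)) ^ k i})
          ((Ideal.span_singleton_le_span_singleton (α := (Localization.Away (p : ℤ))[X])).mpr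
            (Finset.dvd_prod_of_mem
              (fun j => cyclotomic (n j) (Localization.Away (p : ℤ)) ^ k j)
              (Finset.mem_univ i)))) := by
  have : Fact p.Prime := ⟨hp⟩
  have hpu : IsUnit (p : Localization.Away (p : ℤ)) := by
    simpa using IsLocalization.Away.algebraMap_isUnit (S := Localization.Away (p : ℤ)) (p : ℤ)
  exact Ideal.Quotient.pi_factor_span_prod_bijective _ fun i j hij =>
    (isCoprime_cyclotomic_of_padicValNat_ne hpu (hval i j hij)).pow

/-- Let `p` be a prime and `n 0, …, n (m-1)` positive integers with pairwise distinct
`p`-adic valuations, and `k i` positive integers.  Then the natural ring homomorphism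
`ℤ[1/p][q]/(∏ Φ_{n i}^{k i}) → ∏ ℤ[1/p][q]/(Φ_{n i}^{k i})` is bijective. -/
theorem stmt2 (p : ℕ) (hp : p.Prime) (m : ℕ) (n : Fin m → ℕ) (k : Fin m → ℕ)
    (hn : ∀ i, 0 < n i) (hk : ∀ i, 0 < k i)
    (hval : ∀ i j, i ≠ j → padicValNat p (n i) ≠ padicValNat p (n j)) :
    Function.Bijective
      (Pi.ringHom fun i : Fin m =>
        Ideal.Quotient.factor (R := (Localization.Away (p : ℤ))[X])
          (S := Ideal.span {∏ j : Fin m, cyclotomic (n j) (Localization.Away (p : ℤ)) ^ k j})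
          (T := Ideal.span {cyclotomic (n i) (Localization.Away (p : ℤ)) ^ k i})
          ((Ideal.span_singleton_le_span_singleton (α := (Localization.Away (p : ℤ))[X])).mpr
            (Finset.dvd_prod_of_mem
              (fun j => cyclotomic (n j) (Localization.Away (p : ℤ)) ^ k j)
              (Finset.mem_univ i)))) :=
  stmt2_general p hp m n k hval
end

section
/- Let n and k be positive integers. The ℤ-algebra homomorphism h: ℤ[q] → ℤ[ζ_n][x]/(x^k) defined by h(q) = ζ_n + x descends to a well-defined ring homomorphism h: ℤ[q]/(Φ_n(q)^k) → ℤ[ζ_n][x]/(x^k), and this induced homomorphism is injective. -/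
/-! The substitution `q ↦ ζ + x` is a Taylor shift followed by reduction mod `x ^ k`, so its
kernel consists of the `f` with `(q - ζ) ^ k ∣ f` over `ℤ[ζ]`, i.e. over `ℂ`. As `Φ_n` is the
minimal polynomial of `ζ` over `ℚ` and is separable, `q - ζ` divides it only once, so every
factor `q - ζ` of `f` forces a factor `Φ_n`: the kernel is generated by `Φ_n ^ k`, first over `ℚ`
and then, as `Φ_n` is monic, over `ℤ`. -/

open Polynomial

namespace Polynomial

theorem X_pow_dvd_taylor_iff {R : Type*} [CommRing R] (r : R) (k : ℕ) (f : R[X]) :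
    X ^ k ∣ taylor r f ↔ (X - C r) ^ k ∣ f := by
  have hX : taylor r ((X - C r) ^ k) = X ^ k := by simp [taylor_pow, taylor_X]
  rw [← hX]
  exact map_dvd_iff (taylorEquiv r)

theorem aeval_C_add_X {S R : Type*} [CommSemiring S] [CommSemiring R] [Algebra S R]
    (r : R) (f : S[X]) : aeval (C r + X) f = taylor r (f.map (algebraMap S R)) := by
  rw [taylor_apply, comp, eval₂_map, aeval_def, add_comm]
  rfl

theorem minpoly_pow_dvd_of_X_sub_C_pow_dvd_map {K L : Type*} [Field K] [Field L] [Algebra K L]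
    {x : L} (hsep : (minpoly K x).Separable) {k : ℕ} {f : K[X]}
    (h : (X - C x) ^ k ∣ f.map (algebraMap K L)) : minpoly K x ^ k ∣ f := by
  induction k generalizing f with
  | zero => simp
  | succ k ih =>
    obtain ⟨g, rfl⟩ : minpoly K x ∣ f := minpoly.dvd K x <| by
      rw [aeval_def, eval₂_eq_eval_map, ← IsRoot, ← dvd_iff_isRoot]
      exact (dvd_pow_self _ k.succ_ne_zero).trans h
    rw [Polynomial.map_mul] at h
    set p := (minpoly K x).map (algebraMap K L)
    have hfac : p = (X - C x) * (p /ₘ (X - C x)) :=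
      (mul_divByMonic_eq_iff_isRoot.mpr (by simp [p])).symm
    have hcop : IsCoprime ((X - C x) ^ k) (p /ₘ (X - C x)) := by
      refine IsCoprime.pow_left ((irreducible_X_sub_C x).coprime_iff_not_dvd.mpr ?_)
      rintro ⟨d, hd⟩
      have hsq : Squarefree p := hsep.map.squarefree
      exact not_isUnit_X_sub_C x (hsq _ ⟨d, by rw [hfac, hd]; ring⟩)
    rw [hfac, pow_succ', mul_assoc] at h
    rw [pow_succ']
    exact mul_dvd_mul_left _ (ih (hcop.dvd_of_dvd_mul_left
      ((mul_dvd_mul_iff_left (X_sub_C_ne_zero x)).mp h)))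

theorem cyclotomic_pow_dvd_of_X_sub_C_pow_dvd_map {L : Type*} [Field L] [CharZero L] {n : ℕ}
    (hn : 0 < n) {ζ : L} (hζ : IsPrimitiveRoot ζ n) {k : ℕ} {f : ℤ[X]}
    (h : (X - C ζ) ^ k ∣ f.map (algebraMap ℤ L)) : cyclotomic n ℤ ^ k ∣ f := by
  have hsep : (minpoly ℚ ζ).Separable :=
    cyclotomic_eq_minpoly_rat hζ hn ▸ (cyclotomic.irreducible_rat hn).separable
  refine (map_dvd_map (Int.castRingHom ℚ) Int.cast_injective
    ((cyclotomic.monic n ℤ).pow k)).mp ?_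
  rw [Polynomial.map_pow, map_cyclotomic_int, cyclotomic_eq_minpoly_rat hζ hn]
  refine minpoly_pow_dvd_of_X_sub_C_pow_dvd_map hsep ?_
  rwa [map_map, RingHom.ext_int ((algebraMap ℚ L).comp _) (algebraMap ℤ L)]

section RootOfUnity

variable {R L : Type*} [CommRing R] [IsDomain R] [Field L] [CharZero L] [Algebra R L]
  (hinj : Function.Injective (algebraMap R L)) {n : ℕ} (hn : 0 < n) {z : R}
  (hz : IsPrimitiveRoot z n) {k : ℕ}
include hinj hn hz

theorem X_sub_C_pow_dvd_map_iff_cyclotomic_pow_dvd {f : ℤ[X]} :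
    (X - C z) ^ k ∣ f.map (algebraMap ℤ R) ↔ cyclotomic n ℤ ^ k ∣ f := by
  constructor
  · intro h
    refine cyclotomic_pow_dvd_of_X_sub_C_pow_dvd_map hn (hz.map_of_injective hinj) ?_
    have h' := Polynomial.map_dvd (algebraMap R L) h
    rwa [map_map, RingHom.ext_int ((algebraMap R L).comp _) (algebraMap ℤ L), Polynomial.map_pow,
      Polynomial.map_sub, map_X, map_C] at h'
  · rintro ⟨g, rfl⟩
    rw [Polynomial.map_mul, Polynomial.map_pow, map_cyclotomic]
    have hroot : X - C z ∣ cyclotomic n R := dvd_iff_isRoot.mpr (hz.isRoot_cyclotomic hn)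
    exact dvd_mul_of_dvd_left (pow_dvd_pow_of_dvd hroot k) _

theorem aeval_mk_C_add_X_eq_zero_iff (f : ℤ[X]) :
    aeval (Ideal.Quotient.mk (Ideal.span {(X : R[X]) ^ k}) (C z + X)) f = 0 ↔
      cyclotomic n ℤ ^ k ∣ f := by
  rw [← Ideal.Quotient.mkₐ_eq_mk ℤ, aeval_algHom_apply, Ideal.Quotient.mkₐ_eq_mk,
    Ideal.Quotient.eq_zero_iff_mem, Ideal.mem_span_singleton, aeval_C_add_X,
    X_pow_dvd_taylor_iff, X_sub_C_pow_dvd_map_iff_cyclotomic_pow_dvd hinj hn hz]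

end RootOfUnity

end Polynomial

theorem stmt4_general (n k : ℕ) (hn : 0 < n) (ζ : ℂ)
    (hζ : ζ = Complex.exp (2 * Real.pi * Complex.I / n))
    (z : Algebra.adjoin ℤ {ζ}) (hz : (z : ℂ) = ζ) :
    ∃ h : (ℤ[X] ⧸ Ideal.span {cyclotomic n ℤ ^ k}) →+*
        (Polynomial (Algebra.adjoin ℤ {ζ}) ⧸
          Ideal.span {(X : Polynomial (Algebra.adjoin ℤ {ζ})) ^ k}),
      (∀ f : ℤ[X],
          h (Ideal.Quotient.mk (Ideal.span {cyclotomic n ℤ ^ k}) f) =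
            Polynomial.aeval
              (Ideal.Quotient.mk
                (Ideal.span {(X : Polynomial (Algebra.adjoin ℤ {ζ})) ^ k})
                (C z + X)) f) ∧
      Function.Injective h := by
  have hinj : Function.Injective (algebraMap (Algebra.adjoin ℤ {ζ}) ℂ) := Subtype.val_injective
  have hprim : IsPrimitiveRoot z n :=
    .of_map_of_injective (by simpa [hz, hζ] using Complex.isPrimitiveRoot_exp n hn.ne') hinj
  have hker := aeval_mk_C_add_X_eq_zero_iff hinj hn hprim (k := k)
  have hwd : ∀ f ∈ Ideal.span {cyclotomic n ℤ ^ k},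
      aeval (Ideal.Quotient.mk (Ideal.span {X ^ k}) (C z + X)) f = 0 :=
    fun f hf => (hker f).2 (Ideal.mem_span_singleton.1 hf)
  exact ⟨Ideal.Quotient.lift _ (aeval _).toRingHom hwd, fun f => Ideal.Quotient.lift_mk _ _ _,
    RingHom.lift_injective_of_ker_le_ideal _ _
      fun f hf => Ideal.mem_span_singleton.2 ((hker f).1 hf)⟩

/-- The `ℤ`-algebra map `ℤ[q] → ℤ[ζ_n][x]/(x^k)`, `q ↦ ζ_n + x`, descends to a
well-defined ring homomorphism `ℤ[q]/(Φ_n(q)^k) → ℤ[ζ_n][x]/(x^k)`, which is injective. -/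
theorem stmt4 (n k : ℕ) (hn : 0 < n) (hk : 0 < k) (ζ : ℂ)
    (hζ : ζ = Complex.exp (2 * Real.pi * Complex.I / n))
    (z : Algebra.adjoin ℤ {ζ}) (hz : (z : ℂ) = ζ) :
    ∃ h : (ℤ[X] ⧸ Ideal.span {cyclotomic n ℤ ^ k}) →+*
        (Polynomial (Algebra.adjoin ℤ {ζ}) ⧸
          Ideal.span {(X : Polynomial (Algebra.adjoin ℤ {ζ})) ^ k}),
      (∀ f : ℤ[X],
          h (Ideal.Quotient.mk (Ideal.span {cyclotomic n ℤ ^ k}) f) =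
            Polynomial.aeval
              (Ideal.Quotient.mk
                (Ideal.span {(X : Polynomial (Algebra.adjoin ℤ {ζ})) ^ k})
                (C z + X)) f) ∧
      Function.Injective h :=
  stmt4_general n k hn ζ hζ z hz
end

section
/- Let n, k, b be positive integers with gcd(b, n) = 1. Then the Frobenius homomorphism F_b: ℤ[1/b][q]/(Φ_n(q)^k) → ℤ[1/b][q]/(Φ_n(q)^k), induced by q ↦ q^b, is a ring isomorphism (i.e., it is bijective). -/
/-!
Write `x` for the class of `q` and `A = R[q]/(Φ_n(q)^k)`. Since `Φ_n ∣ q^n - 1`, the element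
`x^n` is unipotent. A nilpotent ideal is Henselian, so with `b` invertible every unipotent element
has a unique unipotent `b`-th root; hence the subalgebra generated by `x^b` contains every
unipotent `u` with `u^b` in it, in particular `u = x^(nm)`. Choosing `bc = 1 + nm` gives
`x = (x^b)^c u⁻¹`, so `F_b` is surjective, and a surjective endomorphism of the finite
`R`-module `A` is injective.
-/

open Polynomial

theorem IsAdicComplete.of_isNilpotent {R M : Type*} [CommRing R] [AddCommGroup M] [Module R M]
    {I : Ideal R} (hI : IsNilpotent I) : IsAdicComplete I M := by
  obtain ⟨N, hN⟩ := hI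
  have hbot : ∀ n, N ≤ n → (I ^ n • ⊤ : Submodule R M) = ⊥ := fun n hn => by
    rw [← Nat.add_sub_cancel' hn, pow_add, hN, zero_mul, Submodule.zero_eq_bot, Submodule.bot_smul]
  refine { haus' := fun x hx => ?_, prec' := fun f hf => ⟨f N, fun n => ?_⟩ }
  · simpa [hbot N le_rfl] using hx N
  · rcases le_total n N with hn | hn
    · exact hf hn
    · simpa [hbot n hn, hbot N le_rfl] using (hf hn).symm

section UnipotentRoots

variable {A : Type*} [CommRing A]

theorem eq_of_pow_eq_of_isNilpotent_sub {b : ℕ} (hb : IsUnit (b : A)) {a x : A} (hx : IsUnit x)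
    (hax : IsNilpotent (a - x)) (h : a ^ b = x ^ b) : a = x := by
  set s := ∑ i ∈ Finset.range b, a ^ i * x ^ (b - 1 - i)
  have hs : s * (a - x) = 0 := by rw [geom_sum₂_mul, h, sub_self]
  obtain ⟨t, ht⟩ : a - x ∣ s - b * x ^ (b - 1) := by
    rw [← geom_sum₂_self, ← Finset.sum_sub_distrib]
    exact Finset.dvd_sum fun i _ => by
      rw [← sub_mul]
      exact (sub_dvd_pow_sub_pow a x i).mul_right _
  have hs_unit : IsUnit s := by
    have := ((Commute.all _ _).isNilpotent_mul_right hax (y := t)).isUnit_add_left_of_commute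
      (hb.mul (hx.pow (b - 1))) (Commute.all _ _)
    rwa [← ht, add_sub_cancel] at this
  exact sub_eq_zero.mp (hs_unit.mul_right_eq_zero.mp hs)

theorem exists_pow_eq_of_isNilpotent_sub_one {b : ℕ} (hb0 : 0 < b) (hb : IsUnit (b : A)) {w : A}
    (hw : IsNilpotent (w - 1)) : ∃ r : A, r ^ b = w ∧ IsNilpotent (r - 1) := by
  obtain ⟨N, hN⟩ := hw
  set I := Ideal.span {w - 1}
  have hI : IsNilpotent I :=
    ⟨N, by rw [Ideal.span_singleton_pow, hN, Ideal.span_singleton_zero]; rfl⟩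
  have := IsAdicComplete.of_isNilpotent (M := A) hI
  obtain ⟨r, hr, hrI⟩ := HenselianRing.is_henselian (I := I) (X ^ b - C w)
    (monic_X_pow_sub_C w hb0.ne') 1
    (by
      rw [eval_sub, eval_pow, eval_X, eval_C, one_pow, ← neg_sub, Ideal.neg_mem_iff]
      exact Ideal.mem_span_singleton_self (w - 1))
    (by simpa [derivative_X_pow] using hb.map (Ideal.Quotient.mk I))
  refine ⟨r, by simpa [sub_eq_zero] using hr, ?_⟩
  obtain ⟨c, hc⟩ := Ideal.mem_span_singleton'.mp hrI
  exact hc ▸ (Commute.all _ _).isNilpotent_mul_left ⟨N, hN⟩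

theorem isNilpotent_pow_mul_sub_one {x : A} {n : ℕ} (hx : IsNilpotent (x ^ n - 1)) (m : ℕ) :
    IsNilpotent (x ^ (n * m) - 1) := by
  rw [pow_mul, ← one_pow m, ← geom_sum₂_mul]
  exact (Commute.all _ _).isNilpotent_mul_left hx

end UnipotentRoots

theorem Nat.Coprime.exists_mul_eq_one_add_mul {b n : ℕ} (hbn : b.Coprime n) (hb : 0 < b)
    (hn : 0 < n) : ∃ c m : ℕ, b * c = 1 + n * m := by
  have hφ : b * b ^ (n.totient - 1) = b ^ n.totient := by
    rw [← _root_.pow_succ', Nat.sub_add_cancel (Nat.totient_pos.mpr hn)]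
  have hpos := Nat.one_le_pow n.totient b hb
  obtain ⟨m, hm⟩ := (Nat.modEq_iff_dvd' hpos).mp (Nat.ModEq.pow_totient hbn).symm
  exact ⟨b ^ (n.totient - 1), m, by omega⟩

section Frobenius

variable {R A : Type*} [CommRing R] [CommRing A] [Algebra R A]

theorem Subalgebra.mem_of_pow_mem_of_isNilpotent_sub_one (S : Subalgebra R A) {b : ℕ}
    (hb0 : 0 < b) (hb : IsUnit (b : R)) {u : A} (hu : IsNilpotent (u - 1)) (hub : u ^ b ∈ S) :
    u ∈ S := by
  have hw : IsNilpotent ((⟨u ^ b, hub⟩ : S) - 1) := by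
    rw [← IsNilpotent.map_iff (f := S.val) Subtype.val_injective]
    simpa [← geom_sum_mul] using (Commute.all _ _).isNilpotent_mul_left hu
  obtain ⟨r, hrb, hr⟩ :=
    exists_pow_eq_of_isNilpotent_sub_one hb0 (by simpa using hb.map (algebraMap R S)) hw
  have hr' : IsNilpotent ((r : A) - 1) := by simpa using hr.map S.val
  have hru : (r : A) = u :=
    eq_of_pow_eq_of_isNilpotent_sub (by simpa using hb.map (algebraMap R A))
      (by simpa using hu.isUnit_add_one)
      (by simpa using (Commute.all _ _).isNilpotent_sub hr' hu)
      (by simpa using congrArg Subtype.val hrb)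
  exact hru ▸ r.2

theorem mem_adjoin_pow_of_isNilpotent_pow_sub_one {x : A} {n b : ℕ} (hn : 0 < n) (hb0 : 0 < b)
    (hb : IsUnit (b : R)) (hbn : b.Coprime n) (hx : IsNilpotent (x ^ n - 1)) :
    x ∈ Algebra.adjoin R {x ^ b} := by
  set S := Algebra.adjoin R {x ^ b}
  have hxb : x ^ b ∈ S := Algebra.self_mem_adjoin_singleton R _
  obtain ⟨c, m, hcm⟩ := hbn.exists_mul_eq_one_add_mul hb0 hn
  have hu := isNilpotent_pow_mul_sub_one hx m
  have huS : x ^ (n * m) ∈ S := S.mem_of_pow_mem_of_isNilpotent_sub_one hb0 hb hu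
    (by rw [← pow_mul, mul_comm, pow_mul]; exact pow_mem hxb _)
  have huS_nil : IsNilpotent ((⟨x ^ (n * m), huS⟩ : S) - 1) := by
    rw [← IsNilpotent.map_iff (f := S.val) Subtype.val_injective]
    simpa using hu
  obtain ⟨v, hv⟩ := huS_nil.isUnit_add_one.exists_right_inv
  have huv : x ^ (n * m) * v = 1 := by simpa using congrArg S.val hv
  have hx_eq : x = (x ^ b) ^ c * v := by
    rw [← pow_mul, hcm, pow_add, pow_one, mul_assoc, huv, mul_one]
  rw [hx_eq]
  exact mul_mem (pow_mem hxb c) v.2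

theorem AlgHom.bijective_of_apply_eq_pow [Module.Finite R A] {x : A}
    (hgen : Algebra.adjoin R {x} = ⊤) {n b : ℕ} (hn : 0 < n) (hb0 : 0 < b) (hb : IsUnit (b : R))
    (hbn : b.Coprime n) (hx : IsNilpotent (x ^ n - 1)) (F : A →ₐ[R] A) (hF : F x = x ^ b) :
    Function.Bijective F := by
  have hsurj : Function.Surjective F := by
    rw [← F.range_eq_top, eq_top_iff, ← hgen, Algebra.adjoin_le_iff, Set.singleton_subset_iff]
    refine Algebra.adjoin_le ?_ (mem_adjoin_pow_of_isNilpotent_pow_sub_one hn hb0 hb hbn hx)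
    exact Set.singleton_subset_iff.mpr ⟨x, hF⟩
  exact ⟨OrzechProperty.injective_of_surjective_endomorphism F.toLinearMap hsurj, hsurj⟩

end Frobenius

theorem cyclotomic_dvd_expand_of_coprime (R : Type*) [CommRing R] {n b : ℕ} (hbn : b.Coprime n) :
    cyclotomic n R ∣ expand R b (cyclotomic n R) := by
  induction b using induction_on_primes with
  | zero =>
    rw [(Nat.coprime_zero_left n).mp hbn, expand_zero, cyclotomic_one, eval_sub, eval_X, eval_one,
      sub_self, C_0]
    exact dvd_zero _
  | one => rw [expand_one]
  | prime_mul p a hp ih =>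
    have hpn : ¬p ∣ n := hp.coprime_iff_not_dvd.mp (Nat.Coprime.coprime_mul_right hbn)
    calc cyclotomic n R ∣ expand R p (cyclotomic n R) :=
          Dvd.intro_left _ (cyclotomic_expand_eq_cyclotomic_mul hp hpn R).symm
      _ ∣ expand R p (expand R a (cyclotomic n R)) :=
          _root_.map_dvd (expand R p) (ih (Nat.Coprime.coprime_mul_left hbn))
      _ = expand R (p * a) (cyclotomic n R) := (expand_mul p a _).symm

theorem AdjoinRoot.isNilpotent_root_pow_sub_one (R : Type*) [CommRing R] (n k : ℕ) :
    IsNilpotent (AdjoinRoot.root (cyclotomic n R ^ k) ^ n - 1) := by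
  refine ⟨k, ?_⟩
  rw [← AdjoinRoot.mk_X, ← map_pow, ← map_one (AdjoinRoot.mk _), ← map_sub, ← map_pow,
    AdjoinRoot.mk_eq_zero]
  exact pow_dvd_pow_of_dvd (cyclotomic.dvd_X_pow_sub_one n R) k

theorem stmt6_general (n k b : ℕ) (hn : 0 < n) (hb : 0 < b) (hbn : Nat.Coprime b n)
    (R : Type*) [CommRing R] [IsLocalization.Away ((b : ℤ)) R] :
    ∃ F : (Polynomial R ⧸ Ideal.span {cyclotomic n R ^ k}) →+*
          (Polynomial R ⧸ Ideal.span {cyclotomic n R ^ k}),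
      F (Ideal.Quotient.mk (Ideal.span {cyclotomic n R ^ k}) X) =
          (Ideal.Quotient.mk (Ideal.span {cyclotomic n R ^ k}) X) ^ b ∧
      Function.Bijective F := by
  have hbR : IsUnit (b : R) := by
    simpa using IsLocalization.Away.algebraMap_isUnit (S := R) (b : ℤ)
  set f := cyclotomic n R ^ k
  set x := AdjoinRoot.root f
  have hfx : aeval (x ^ b) f = 0 := by
    obtain ⟨g, hg⟩ := cyclotomic_dvd_expand_of_coprime R hbn
    rw [map_pow, ← expand_aeval, hg, map_mul, mul_pow, ← map_pow, AdjoinRoot.aeval_eq,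
      AdjoinRoot.mk_self, zero_mul]
  have : Module.Finite R (AdjoinRoot f) :=
    .of_basis (AdjoinRoot.powerBasis' ((cyclotomic.monic n R).pow k)).basis
  set F := AdjoinRoot.liftAlgHom f (Algebra.ofId R _) (x ^ b) hfx
  have hF : F x = x ^ b := AdjoinRoot.liftAlgHom_root _ _ _ hfx
  exact ⟨F.toRingHom, hF, F.bijective_of_apply_eq_pow AdjoinRoot.adjoinRoot_eq_top hn hb hbR hbn
    (AdjoinRoot.isNilpotent_root_pow_sub_one R n k) hF⟩

/-- The Frobenius homomorphism `F_b : ℤ[1/b][q]/(Φ_n(q)^k) → ℤ[1/b][q]/(Φ_n(q)^k)`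
induced by `q ↦ q^b` (for `b` coprime to `n`) is a ring isomorphism.  Here `R` is
the localization `ℤ[1/b]` of `ℤ` away from `b`. -/
theorem stmt6 (n k b : ℕ) (hn : 0 < n) (hk : 0 < k) (hb : 0 < b) (hbn : Nat.Coprime b n)
    (R : Type*) [CommRing R] [IsLocalization.Away ((b : ℤ)) R] :
    ∃ F : (Polynomial R ⧸ Ideal.span {cyclotomic n R ^ k}) →+*
          (Polynomial R ⧸ Ideal.span {cyclotomic n R ^ k}),
      F (Ideal.Quotient.mk (Ideal.span {cyclotomic n R ^ k}) X) =
          (Ideal.Quotient.mk (Ideal.span {cyclotomic n R ^ k}) X) ^ b ∧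
      Function.Bijective F :=
  stmt6_general n k b hn hb hbn R
end

section
/- Let b be a positive integer and define the cyclotomic completion ℤ[1/b][q]^{ℕ_b} as the inverse limit of the rings ℤ[1/b][q]/(f(q)), where f ranges over the multiplicative set of finite products ∏_i Φ_{n_i}(q)^{k_i} with all n_i coprime to b, directed by divisibility (realized concretely as the subring of the product ∏_f ℤ[1/b][q]/(f(q)) consisting of families compatible under the natural projection maps). Then the Frobenius endomorphism F_b of ℤ[1/b][q]^{ℕ_b} induced componentwise by q ↦ q^b (well-defined since f(q) divides f(q^b) in ℤ[1/b][q] for every such f) is a ring isomorphism. -/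
/-!
Every `f ∈ cycSet b R` is monic and divides some `(q ^ N - 1) ^ K` with `N` coprime to `b`, so
`t = q ^ N - 1` is nilpotent in `A = R[q]/(f)`. If `b * c ≡ 1 [MOD N]` then `q ≡ (q ^ b) ^ c`
modulo `t`, hence `A = S + t A` where `S` is the image of `q ↦ q ^ b`. Since `b` is a unit,
`s = q ^ (N * b) - 1 ∈ S` is `t` times a unit, and `A = S + s A` with `s ∈ S` nilpotent forces
`A = S`. A surjective endomorphism of the finite `R`-module `A` is injective, and the
componentwise inverses are again compatible with the projections.
-/

open Polynomial


/-- The multiplicative set of finite products `∏_i Φ_{n_i}(q)^{k_i}` with all `n_i`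
positive and coprime to `b`. -/
noncomputable def cycSet (b : ℕ) (R : Type) [CommRing R] : Submonoid (Polynomial R) :=
  Submonoid.closure {f | ∃ n : ℕ, 0 < n ∧ Nat.Coprime n b ∧ f = cyclotomic n R}

/-- The cyclotomic completion `ℤ[1/b][q]^{ℕ_b}`, realized concretely as the subring of
`∏_f R[q]/(f(q))` (where `f` ranges over `cycSet b R`) consisting of the families
compatible under the natural projection maps. -/
noncomputable def cycCompletion (b : ℕ) (R : Type) [CommRing R] :
    Subring (∀ f : cycSet b R, Polynomial R ⧸ Ideal.span {(f : Polynomial R)}) where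
  carrier := {x | ∀ (f g : cycSet b R) (h : (f : Polynomial R) ∣ (g : Polynomial R)),
    Ideal.Quotient.factor (S := Ideal.span {(g : Polynomial R)}) (T := Ideal.span {(f : Polynomial R)})
      (Ideal.span_singleton_le_span_singleton.mpr h) (x g) = x f}
  mul_mem' := by
    intro a c ha hc f g h
    simp only [Pi.mul_apply, map_mul]
    rw [ha f g h, hc f g h]
  one_mem' := by
    intro f g h
    simp
  add_mem' := by
    intro a c ha hc f g h
    simp only [Pi.add_apply, map_add]
    rw [ha f g h, hc f g h]
  zero_mem' := by
    intro f g h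
    simp
  neg_mem' := by
    intro a ha f g h
    simp only [Pi.neg_apply, map_neg]
    rw [ha f g h]

namespace Polynomial

variable {R : Type*} [CommRing R]

theorem cyclotomic_dvd_expand_of_coprime {n b : ℕ} (h : n.Coprime b) :
    cyclotomic n R ∣ expand R b (cyclotomic n R) := by
  induction b using induction_on_primes with
  | zero =>
    obtain rfl : n = 1 := by simpa using h
    simp
  | one => rw [expand_one]
  | prime_mul p a hp ih =>
    have hpn : ¬p ∣ n :=
      hp.coprime_iff_not_dvd.mp (h.coprime_dvd_right (dvd_mul_right p a)).symm
    have hp_dvd : cyclotomic n R ∣ expand R p (cyclotomic n R) := by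
      rw [cyclotomic_expand_eq_cyclotomic_mul hp hpn]
      exact dvd_mul_left _ _
    rw [mul_comm, ← expand_expand]
    exact (ih (h.coprime_dvd_right (dvd_mul_left a p))).trans (_root_.map_dvd _ hp_dvd)

end Polynomial

theorem Subring.eq_top_of_forall_exists_add_mul {A : Type*} [CommRing A] (S : Subring A)
    {s : A} (hsS : s ∈ S) (hs : IsNilpotent s) (h : ∀ x, ∃ y ∈ S, ∃ z, x = y + s * z) :
    S = ⊤ := by
  have hpow : ∀ k x, ∃ y ∈ S, ∃ z, x = y + s ^ k * z := by
    intro k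
    induction k with
    | zero => exact fun x => ⟨0, S.zero_mem, x, by simp⟩
    | succ k ih =>
      intro x
      obtain ⟨y, hy, z, rfl⟩ := ih x
      obtain ⟨y', hy', z', rfl⟩ := h z
      exact ⟨y + s ^ k * y', S.add_mem hy (S.mul_mem (S.pow_mem hsS k) hy'), z', by ring⟩
  obtain ⟨k, hk⟩ := hs
  refine eq_top_iff.mpr fun x _ => ?_
  obtain ⟨y, hy, z, rfl⟩ := hpow k x
  simpa [hk] using hy

theorem exists_isUnit_pow_sub_one_eq_mul {A : Type*} [CommRing A] {u : A}
    (hu : IsNilpotent (u - 1)) {b : ℕ} (hb : IsUnit (b : A)) :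
    ∃ v, IsUnit v ∧ u ^ b - 1 = (u - 1) * v := by
  refine ⟨∑ i ∈ Finset.range b, u ^ i, ?_, (mul_geom_sum u b).symm⟩
  obtain ⟨w, hw⟩ : u - 1 ∣ ∑ i ∈ Finset.range b, u ^ i - b := by
    have : ∑ i ∈ Finset.range b, u ^ i - b = ∑ i ∈ Finset.range b, (u ^ i - 1 ^ i) := by
      simp [Finset.sum_sub_distrib]
    rw [this]
    exact Finset.dvd_sum fun i _ => sub_dvd_pow_sub_pow u 1 i
  have hnil : IsNilpotent (∑ i ∈ Finset.range b, u ^ i - b) :=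
    hw ▸ (Commute.all _ _).isNilpotent_mul_right hu
  simpa using hnil.isUnit_add_left_of_commute hb (Commute.all _ _)

namespace cycSet

variable {b : ℕ} {R : Type} [CommRing R] {f : R[X]}

theorem monic_of_mem (hf : f ∈ cycSet b R) : f.Monic := by
  induction hf using Submonoid.closure_induction with
  | mem x hx => obtain ⟨n, -, -, rfl⟩ := hx; exact cyclotomic.monic n R
  | one => exact monic_one
  | mul x y _ _ hx hy => exact hx.mul hy

theorem dvd_expand_of_mem (hf : f ∈ cycSet b R) : f ∣ expand R b f := by
  induction hf using Submonoid.closure_induction with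
  | mem x hx => obtain ⟨n, -, hnb, rfl⟩ := hx; exact cyclotomic_dvd_expand_of_coprime hnb
  | one => exact one_dvd _
  | mul x y _ _ hx hy => rw [map_mul]; exact mul_dvd_mul hx hy

theorem exists_dvd_X_pow_sub_one_pow (hf : f ∈ cycSet b R) :
    ∃ N K : ℕ, 0 < N ∧ N.Coprime b ∧ f ∣ (X ^ N - 1) ^ K := by
  induction hf using Submonoid.closure_induction with
  | mem x hx =>
    obtain ⟨n, hn, hnb, rfl⟩ := hx
    exact ⟨n, 1, hn, hnb, by simpa using cyclotomic.dvd_X_pow_sub_one n R⟩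
  | one => exact ⟨1, 0, one_pos, Nat.coprime_one_left b, by simp⟩
  | mul x y _ _ hx hy =>
    obtain ⟨N₁, K₁, hN₁, hN₁b, hx⟩ := hx
    obtain ⟨N₂, K₂, hN₂, hN₂b, hy⟩ := hy
    refine ⟨N₁ * N₂, K₁ + K₂, Nat.mul_pos hN₁ hN₂, hN₁b.mul_left hN₂b, ?_⟩
    rw [pow_add]
    refine mul_dvd_mul (hx.trans (pow_dvd_pow_of_dvd ?_ K₁))
      (hy.trans (pow_dvd_pow_of_dvd ?_ K₂))
    · simpa only [one_pow, pow_mul] using sub_dvd_pow_sub_pow ((X : R[X]) ^ N₁) 1 N₂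
    · simpa only [one_pow, pow_mul'] using sub_dvd_pow_sub_pow ((X : R[X]) ^ N₂) 1 N₁

end cycSet

section quotExpand

variable {R : Type*} [CommRing R] {b : ℕ} {f : R[X]}

noncomputable def quotExpand (b : ℕ) (hf : f ∣ expand R b f) :
    (R[X] ⧸ Ideal.span {f}) →ₐ[R] R[X] ⧸ Ideal.span {f} :=
  Ideal.quotientMapₐ _ (expand R b) fun p hp => by
    rw [Ideal.mem_comap, Ideal.mem_span_singleton] at *
    exact hf.trans (_root_.map_dvd _ hp)

theorem quotExpand_mk (hf : f ∣ expand R b f) (p : R[X]) :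
    quotExpand b hf (Ideal.Quotient.mk _ p) = Ideal.Quotient.mk _ (expand R b p) :=
  rfl

theorem factor_quotExpand {g : R[X]} (hf : f ∣ expand R b f) (hg : g ∣ expand R b g)
    (hfg : f ∣ g) (x : R[X] ⧸ Ideal.span {g}) :
    Ideal.Quotient.factor (Ideal.span_singleton_le_span_singleton.mpr hfg) (quotExpand b hg x) =
      quotExpand b hf
        (Ideal.Quotient.factor (Ideal.span_singleton_le_span_singleton.mpr hfg) x) := by
  obtain ⟨p, rfl⟩ := Ideal.Quotient.mk_surjective x
  rfl

theorem exists_sub_quotExpand_mem_span {N : ℕ} (hN : 0 < N) (hNb : N.Coprime b)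
    (hf : f ∣ expand R b f) (x : R[X] ⧸ Ideal.span {f}) :
    ∃ y, x - quotExpand b hf y ∈
      Ideal.span {Ideal.Quotient.mk (Ideal.span {f}) (X ^ N - 1)} := by
  set I := Ideal.span {Ideal.Quotient.mk (Ideal.span {f}) (X ^ N - 1)}
  set c := b ^ (N.totient - 1)
  have hbc : b * c ≡ 1 [MOD N] := by
    rw [← pow_succ', Nat.sub_add_cancel (Nat.totient_pos.mpr hN)]
    exact Nat.ModEq.pow_totient hNb.symm
  set π := (Ideal.Quotient.mkₐ R I).comp (Ideal.Quotient.mkₐ R (Ideal.span {f}))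
  have hπN : π X ^ N = 1 := by
    rw [← map_pow, ← sub_eq_zero, ← map_one π, ← map_sub]
    exact Ideal.Quotient.eq_zero_iff_mem.mpr (Ideal.mem_span_singleton_self _)
  have hπ : π.comp (expand R (b * c)) = π := by
    refine algHom_ext ?_
    rw [AlgHom.comp_apply, expand_X, map_pow, pow_eq_pow_mod _ hπN, hbc, ← pow_eq_pow_mod _ hπN,
      pow_one]
  obtain ⟨p, rfl⟩ := Ideal.Quotient.mk_surjective x
  refine ⟨Ideal.Quotient.mk _ (expand R c p), Ideal.Quotient.eq.mp ?_⟩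
  rw [quotExpand_mk, expand_expand]
  exact (congrArg (· p) hπ).symm

theorem quotExpand_surjective (hb : IsUnit (b : R)) {N K : ℕ} (hN : 0 < N) (hNb : N.Coprime b)
    (hfN : f ∣ (X ^ N - 1) ^ K) (hf : f ∣ expand R b f) :
    Function.Surjective (quotExpand b hf) := by
  set q := Ideal.Quotient.mk (Ideal.span {f}) (X : R[X])
  have ht : IsNilpotent (q ^ N - 1) :=
    ⟨K, by rw [← map_pow, ← map_one (Ideal.Quotient.mk _), ← map_sub, ← map_pow,
      Ideal.Quotient.eq_zero_iff_mem, Ideal.mem_span_singleton]; exact hfN⟩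
  obtain ⟨v, hv, htv⟩ := exists_isUnit_pow_sub_one_eq_mul ht
    (by simpa using hb.map (algebraMap R (R[X] ⧸ Ideal.span {f})))
  have hψt : quotExpand b hf (q ^ N - 1) = (q ^ N - 1) * v := by
    have hψq : quotExpand b hf q = q ^ b := by rw [quotExpand_mk, expand_X, map_pow]
    rw [← htv, map_sub, map_pow, map_one, hψq, ← pow_mul, ← pow_mul, mul_comm]
  refine RingHom.range_eq_top.mp <| Subring.eq_top_of_forall_exists_add_mul _ ⟨_, hψt⟩
    ((Commute.all _ _).isNilpotent_mul_right ht) fun x => ?_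
  obtain ⟨y, hy⟩ := exists_sub_quotExpand_mem_span hN hNb hf x
  obtain ⟨z, hz⟩ := Ideal.mem_span_singleton'.mp hy
  have hvv : v * ↑hv.unit⁻¹ = 1 := hv.mul_val_inv
  refine ⟨_, ⟨y, rfl⟩, ↑hv.unit⁻¹ * z, ?_⟩
  simp only [map_pow, map_sub, map_one] at hz
  linear_combination (-1) * hz - (q ^ N - 1) * z * hvv

theorem quotExpand_bijective (hb : IsUnit (b : R)) (hmonic : f.Monic) {N K : ℕ} (hN : 0 < N)
    (hNb : N.Coprime b) (hfN : f ∣ (X ^ N - 1) ^ K) (hf : f ∣ expand R b f) :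
    Function.Bijective (quotExpand b hf) :=
  have := hmonic.finite_quotient
  OrzechProperty.bijective_of_surjective_endomorphism (quotExpand b hf).toLinearMap
    (quotExpand_surjective hb hN hNb hfN hf)

end quotExpand

namespace cycCompletion

variable {b : ℕ} {R : Type} [CommRing R]
  (φ : ∀ f : cycSet b R,
    (R[X] ⧸ Ideal.span {(f : R[X])}) →+* R[X] ⧸ Ideal.span {(f : R[X])})
  (hφ : ∀ (f g : cycSet b R) (h : (f : R[X]) ∣ g) x,
    Ideal.Quotient.factor (Ideal.span_singleton_le_span_singleton.mpr h) (φ g x) =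
      φ f (Ideal.Quotient.factor (Ideal.span_singleton_le_span_singleton.mpr h) x))

noncomputable def map : cycCompletion b R →+* cycCompletion b R :=
  RingHom.codRestrict
    ((RingHom.pi fun f => (φ f).comp (Pi.evalRingHom _ f)).comp (cycCompletion b R).subtype) _
    fun x f g h => by
      change Ideal.Quotient.factor _ (φ g (x.1 g)) = φ f (x.1 f)
      rw [hφ f g h, x.2 f g h]

theorem map_bijective (hbij : ∀ f, Function.Bijective (φ f)) :
    Function.Bijective (map φ hφ) := by
  refine ⟨fun x y hxy => Subtype.ext <| funext fun f => (hbij f).1 ?_, fun y => ?_⟩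
  · exact congrFun (congrArg Subtype.val hxy) f
  have hinv f := Function.rightInverse_surjInv (hbij f).2
  refine ⟨⟨fun f => Function.surjInv (hbij f).2 (y.1 f), fun f g h => (hbij f).1 ?_⟩,
    Subtype.ext <| funext fun f => hinv f (y.1 f)⟩
  rw [← hφ f g h, hinv, hinv, y.2 f g h]

end cycCompletion

theorem stmt8_general (b : ℕ) (R : Type) [CommRing R] [IsLocalization.Away ((b : ℤ)) R] :
    ∃ F : cycCompletion b R →+* cycCompletion b R,
      (∀ (x : cycCompletion b R) (f : cycSet b R) (p : Polynomial R),
          (x : ∀ f : cycSet b R, Polynomial R ⧸ Ideal.span {(f : Polynomial R)}) f =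
            Ideal.Quotient.mk (Ideal.span {(f : Polynomial R)}) p →
          (F x : ∀ f : cycSet b R, Polynomial R ⧸ Ideal.span {(f : Polynomial R)}) f =
            Ideal.Quotient.mk (Ideal.span {(f : Polynomial R)})
              (Polynomial.eval₂ Polynomial.C (Polynomial.X ^ b) p)) ∧
      Function.Bijective F := by
  have hb : IsUnit (b : R) := by
    simpa using IsLocalization.Away.algebraMap_isUnit (S := R) (b : ℤ)
  have hdvd (f : cycSet b R) := cycSet.dvd_expand_of_mem f.2
  refine ⟨cycCompletion.map (fun f => quotExpand b (hdvd f))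
    (fun f g h => factor_quotExpand (hdvd f) (hdvd g) h), fun x f p hp => ?_,
    cycCompletion.map_bijective _ _ fun f => ?_⟩
  · change quotExpand b (hdvd f) (x.1 f) = _
    rw [hp, quotExpand_mk, coe_expand]
  · obtain ⟨N, K, hN, hNb, hfN⟩ := cycSet.exists_dvd_X_pow_sub_one_pow f.2
    exact quotExpand_bijective hb (cycSet.monic_of_mem f.2) hN hNb hfN (hdvd f)

/-- The Frobenius endomorphism of the cyclotomic completion `ℤ[1/b][q]^{ℕ_b}`, induced
componentwise by `q ↦ q^b`, is a ring isomorphism.  Here `R` is the localization `ℤ[1/b]`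
of `ℤ` away from `b`. -/
theorem stmt8 (b : ℕ) (hb : 0 < b) (R : Type) [CommRing R] [IsLocalization.Away ((b : ℤ)) R] :
    ∃ F : cycCompletion b R →+* cycCompletion b R,
      (∀ (x : cycCompletion b R) (f : cycSet b R) (p : Polynomial R),
          (x : ∀ f : cycSet b R, Polynomial R ⧸ Ideal.span {(f : Polynomial R)}) f =
            Ideal.Quotient.mk (Ideal.span {(f : Polynomial R)}) p →
          (F x : ∀ f : cycSet b R, Polynomial R ⧸ Ideal.span {(f : Polynomial R)}) f =
            Ideal.Quotient.mk (Ideal.span {(f : Polynomial R)})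
              (Polynomial.eval₂ Polynomial.C (Polynomial.X ^ b) p)) ∧
      Function.Bijective F :=
  stmt8_general b R
end

section
/- Let n and b be coprime positive integers, let k be a positive integer, and let y be an element of the ring ℚ[q]/(Φ_n(q)^k) with y^b = 1. Then y is the image of 1 or of −1 under the quotient map. Moreover, if b is odd then y is the image of 1. -/
/-!
Reducing modulo `Φ_n` maps `ℚ[q]/(Φ_n^k)` onto the cyclotomic field `ℚ(ζ_n)`. There the image `x`
of `y` has order `d ∣ b` coprime to `n`, so `ζ_n x` is a primitive `nd`-th root of unity and
`φ(n) φ(d) = φ(nd) ≤ [ℚ(ζ_n) : ℚ] = φ(n)`; hence `φ(d) = 1` and `x = ±1`. The kernel of the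
reduction is nilpotent, and a root of unity `u` with `u - 1` nilpotent in a `ℚ`-algebra is `1`,
so `±y` is `1`. For odd `b`, `y = -1` would force `-1 = 1` in `ℚ(ζ_n)`.
-/

open Polynomial

section UnipotentRootOfUnity

variable {R : Type*} [CommRing R]

/-- `x ^ b - 1 = (x - 1) (1 + x + ⋯ + x ^ (b - 1))`, and the second factor is `b` plus a
multiple of `x - 1`, hence a unit. -/
theorem eq_one_of_pow_eq_one_of_isNilpotent_sub_one {x : R} {b : ℕ} (hb : IsUnit (b : R))
    (hx : IsNilpotent (x - 1)) (h : x ^ b = 1) : x = 1 := by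
  obtain ⟨c, hc⟩ : x - 1 ∣ ∑ i ∈ Finset.range b, (x ^ i - 1) :=
    Finset.dvd_sum fun i _ => sub_one_dvd_pow_sub_one x i
  have hsum : ∑ i ∈ Finset.range b, x ^ i = b + (x - 1) * c := by
    rw [← hc, Finset.sum_sub_distrib]
    simp
  have hunit : IsUnit (∑ i ∈ Finset.range b, x ^ i) := by
    rw [hsum]
    exact (Commute.all _ _).isNilpotent_mul_right hx |>.isUnit_add_left_of_commute hb
      (Commute.all _ _)
  have hzero : (x - 1) * ∑ i ∈ Finset.range b, x ^ i = 0 := by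
    rw [mul_comm, geom_sum_mul, h, sub_self]
  exact sub_eq_zero.mp (hunit.mul_left_eq_zero.mp hzero)

theorem isUnit_natCast_of_algebraRat [Algebra ℚ R] {b : ℕ} (hb : b ≠ 0) : IsUnit (b : R) := by
  simpa using (isUnit_iff_ne_zero.mpr (Nat.cast_ne_zero.mpr hb : (b : ℚ) ≠ 0)).map
    (algebraMap ℚ R)

end UnipotentRootOfUnity

section RootsOfUnityInCyclotomicFields

variable {K : Type*} [Field K] [CharZero K] [FiniteDimensional ℚ K]

theorem IsPrimitiveRoot.totient_le_finrank {μ : K} {m : ℕ} (hμ : IsPrimitiveRoot μ m)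
    (hm : 0 < m) : m.totient ≤ Module.finrank ℚ K := by
  rw [← natDegree_cyclotomic m ℚ, cyclotomic_eq_minpoly_rat hμ hm]
  exact minpoly.natDegree_le μ

theorem IsPrimitiveRoot.orderOf_dvd_two_of_coprime {ζ : K} {n : ℕ} (hζ : IsPrimitiveRoot ζ n)
    (hn : 0 < n) (hK : Module.finrank ℚ K ≤ n.totient) {x : K} (hx : IsOfFinOrder x)
    (hnx : n.Coprime (orderOf x)) : orderOf x ∣ 2 := by
  have hprim : IsPrimitiveRoot (ζ * x) (n * orderOf x) := by
    have horder := (Commute.all ζ x).orderOf_mul_eq_mul_orderOf_of_coprime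
      (by rwa [← hζ.eq_orderOf])
    rw [← hζ.eq_orderOf] at horder
    exact horder ▸ IsPrimitiveRoot.orderOf _
  have hle := (hprim.totient_le_finrank (Nat.mul_pos hn hx.orderOf_pos)).trans hK
  rw [Nat.totient_mul hnx] at hle
  have htot : (orderOf x).totient = 1 := by
    have := Nat.totient_pos.mpr hn
    have := Nat.totient_pos.mpr hx.orderOf_pos
    nlinarith
  rcases Nat.totient_eq_one_iff.mp htot with h | h <;> simp [h]

theorem IsPrimitiveRoot.eq_one_or_neg_one_of_pow_eq_one_of_coprime {ζ : K} {n : ℕ}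
    (hζ : IsPrimitiveRoot ζ n) (hn : 0 < n) (hK : Module.finrank ℚ K ≤ n.totient) {x : K} {b : ℕ}
    (hb : 0 < b) (hnb : n.Coprime b) (hx : x ^ b = 1) : x = 1 ∨ x = -1 := by
  have hdvd := hζ.orderOf_dvd_two_of_coprime hn hK (isOfFinOrder_iff_pow_eq_one.mpr ⟨b, hb, hx⟩)
    (hnb.coprime_dvd_right (orderOf_dvd_of_pow_eq_one hx))
  exact sq_eq_one_iff.mp (orderOf_dvd_iff_pow_eq_one.mp hdvd)

end RootsOfUnityInCyclotomicFields

section QuotientByPower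

variable {R : Type*} [CommRing R] {p : R} {k : ℕ}

theorem span_pow_le_span (hk : k ≠ 0) : Ideal.span {p ^ k} ≤ Ideal.span {p} :=
  Ideal.span_singleton_le_span_singleton.mpr (dvd_pow_self p hk)

theorem isNilpotent_of_factor_eq_zero (hk : k ≠ 0) {c : R ⧸ Ideal.span {p ^ k}}
    (hc : Ideal.Quotient.factor (span_pow_le_span hk) c = 0) : IsNilpotent c := by
  obtain ⟨q, rfl⟩ := Ideal.Quotient.mk_surjective c
  rw [Ideal.Quotient.factor_mk, Ideal.Quotient.eq_zero_iff_mem,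
    Ideal.mem_span_singleton] at hc
  obtain ⟨g, rfl⟩ := hc
  refine ⟨k, ?_⟩
  rw [← map_pow, Ideal.Quotient.eq_zero_iff_mem, mul_pow]
  exact Ideal.mem_span_singleton.mpr (dvd_mul_right _ _)

theorem eq_one_of_factor_eq_one_of_pow_eq_one (hk : k ≠ 0) {c : R ⧸ Ideal.span {p ^ k}}
    (hc : Ideal.Quotient.factor (span_pow_le_span hk) c = 1) {m : ℕ}
    (hm : IsUnit (m : R ⧸ Ideal.span {p ^ k})) (hcm : c ^ m = 1) : c = 1 :=
  eq_one_of_pow_eq_one_of_isNilpotent_sub_one hm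
    (isNilpotent_of_factor_eq_zero hk (by rw [map_sub, hc, map_one, sub_self])) hcm

end QuotientByPower

section CyclotomicAdjoinRoot

variable {n : ℕ}

theorem isPrimitiveRoot_root_cyclotomic (hn : 0 < n) :
    IsPrimitiveRoot (AdjoinRoot.root (cyclotomic n ℚ)) n := by
  have := Fact.mk (cyclotomic.irreducible_rat hn)
  have : NeZero (n : AdjoinRoot (cyclotomic n ℚ)) := ⟨Nat.cast_ne_zero.mpr hn.ne'⟩
  rw [← isRoot_cyclotomic_iff, ← map_cyclotomic n (algebraMap ℚ (AdjoinRoot (cyclotomic n ℚ)))]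
  exact AdjoinRoot.isRoot_root _

theorem finrank_adjoinRoot_cyclotomic :
    Module.finrank ℚ (AdjoinRoot (cyclotomic n ℚ)) = n.totient := by
  rw [(AdjoinRoot.powerBasis (cyclotomic_ne_zero n ℚ)).finrank, AdjoinRoot.powerBasis_dim,
    natDegree_cyclotomic]

end CyclotomicAdjoinRoot

/-- If `n` and `b` are coprime positive integers, `k` is a positive integer and
`y ∈ ℚ[q]/(Φ_n(q)^k)` satisfies `y^b = 1`, then `y` is the image of `1` or of `-1`;
moreover if `b` is odd then `y` is the image of `1`. -/
theorem stmt10 (n b k : ℕ) (hn : 0 < n) (hb : 0 < b) (hk : 0 < k) (hnb : Nat.Coprime n b)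
    (y : ℚ[X] ⧸ Ideal.span {cyclotomic n ℚ ^ k}) (hy : y ^ b = 1) :
    (y = Ideal.Quotient.mk (Ideal.span {cyclotomic n ℚ ^ k}) 1 ∨
      y = Ideal.Quotient.mk (Ideal.span {cyclotomic n ℚ ^ k}) (-1)) ∧
    (Odd b → y = Ideal.Quotient.mk (Ideal.span {cyclotomic n ℚ ^ k}) 1) := by
  have := Fact.mk (cyclotomic.irreducible_rat hn)
  have : CharZero (AdjoinRoot (cyclotomic n ℚ)) :=
    charZero_of_injective_algebraMap (algebraMap ℚ _).injective
  have := (AdjoinRoot.powerBasis (cyclotomic_ne_zero n ℚ)).finite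
  let π : ℚ[X] ⧸ Ideal.span {cyclotomic n ℚ ^ k} →+* AdjoinRoot (cyclotomic n ℚ) :=
    Ideal.Quotient.factor (span_pow_le_span hk.ne')
  have hπy : π y = 1 ∨ π y = -1 :=
    (isPrimitiveRoot_root_cyclotomic hn).eq_one_or_neg_one_of_pow_eq_one_of_coprime hn
      finrank_adjoinRoot_cyclotomic.le hb hnb (by rw [← map_pow, hy, map_one])
  have h2b : IsUnit ((2 * b : ℕ) : ℚ[X] ⧸ Ideal.span {cyclotomic n ℚ ^ k}) :=
    isUnit_natCast_of_algebraRat (by omega)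
  have hy' : y = 1 ∨ y = -1 := by
    refine hπy.imp (fun h => eq_one_of_factor_eq_one_of_pow_eq_one hk.ne' h h2b ?_) fun h => ?_
    · rw [pow_mul', hy, one_pow]
    · rw [← neg_eq_iff_eq_neg]
      have hneg : π (-y) = 1 := by rw [map_neg, h, neg_neg]
      refine eq_one_of_factor_eq_one_of_pow_eq_one hk.ne' hneg h2b ?_
      rw [pow_mul, neg_sq, ← pow_mul, pow_mul', hy, one_pow]
  refine ⟨by simpa using hy', fun hodd => ?_⟩
  rcases hy' with rfl | rfl
  · simp
  · have hneg : (-1 : AdjoinRoot (cyclotomic n ℚ)) = 1 := by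
      simpa [hodd.neg_one_pow] using congrArg π hy
    norm_num at hneg
end

section
/- Let b and n be coprime positive integers, let k be a positive integer, and let A := ℤ[1/b][q]/(Φ_n(q)^k), with q̄ denoting the image of q in A. If b is odd, then A contains a unique element y with y^b = q̄, and this y is invertible in A. If b is even, then A contains exactly two elements y with y^b = q̄, one being the negative of the other, and both are invertible in A. -/
/-!
Since `b` is invertible, `b`-th roots lift uniquely along nilpotent thickenings (Hensel's lemma
for nilpotents, `Polynomial.existsUnique_nilpotent_sub_and_aeval_eq_zero`), and the kernel of
`A → ℚ(ζₙ)`, `q̄ ↦ ζₙ`, is nilpotent. Existence: if `bc ≡ 1 [MOD n]` then `(q̄ ^ c) ^ b - q̄` is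
nilpotent because `q̄ ^ n - 1` is. Uniqueness: two `b`-th roots differ by a `b`-th root of unity
whose image `ω ∈ ℚ(ζₙ)` has order `m` prime to `n`; then `ωζₙ` is a primitive `mn`-th root of
unity, so `φ(m)φ(n) ≤ [ℚ(ζₙ) : ℚ] = φ(n)`, whence `m ∣ 2` and `ω = ±1`.
-/

open Polynomial

section NilpotentRoots

variable {A : Type*} [CommRing A] {b : ℕ}

theorem existsUnique_pow_eq_of_isNilpotent_sub (hb : IsUnit (b : A)) {x a : A} (hx : IsUnit x)
    (h : IsNilpotent (x ^ b - a)) : ∃! r, IsNilpotent (x - r) ∧ r ^ b = a := by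
  have := existsUnique_nilpotent_sub_and_aeval_eq_zero (P := X ^ b - C a) (x := x)
    (by simpa using h) (by simp [derivative_X_pow, hb, hx.pow])
  simpa [sub_eq_zero] using this

theorem eq_of_pow_eq_pow_of_isNilpotent_sub (hb : IsUnit (b : A)) {x y : A} (hx : IsUnit x)
    (hxy : IsNilpotent (x - y)) (h : y ^ b = x ^ b) : y = x :=
  (existsUnique_pow_eq_of_isNilpotent_sub hb hx (by simp)).unique ⟨hxy, h⟩ ⟨by simp, rfl⟩

theorem isNilpotent_pow_sub_pow_of_modEq {n : ℕ} {q : A} (hq : IsNilpotent (q ^ n - 1))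
    {i j : ℕ} (hij : i ≡ j [MOD n]) : IsNilpotent (q ^ i - q ^ j) := by
  wlog hle : i ≤ j generalizing i j
  · rw [← neg_sub, isNilpotent_neg_iff]
    exact this hij.symm (le_of_not_ge hle)
  obtain ⟨t, ht⟩ := (Nat.modEq_iff_dvd' hle).1 hij
  obtain ⟨s, hs⟩ := sub_dvd_pow_sub_pow (q ^ n) 1 t
  have hj : q ^ j = q ^ i * (q ^ n) ^ t := by
    rw [← pow_mul, ← pow_add, ← ht, Nat.add_sub_cancel' hle]
  have : q ^ i - q ^ j = (q ^ n - 1) * -(q ^ i * s) := by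
    linear_combination (-(q ^ i)) * hs - hj
  rw [this]
  exact Commute.isNilpotent_mul_right (Commute.all _ _) hq

theorem exists_isUnit_pow_eq_of_isNilpotent_pow_sub_one {n : ℕ} [NeZero n]
    (hb : IsUnit (b : A)) (hbn : b.Coprime n) {q : A} (hq : IsNilpotent (q ^ n - 1)) :
    ∃ y, IsUnit y ∧ y ^ b = q := by
  obtain ⟨c, -, hc⟩ := Nat.exists_mul_mod_eq_of_coprime 1 hbn (NeZero.ne n)
  have hqu : IsUnit q := (isUnit_pow_iff (NeZero.ne n)).1 (by simpa using hq.isUnit_add_one)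
  have happrox : IsNilpotent ((q ^ c) ^ b - q) := by
    simpa [← pow_mul, mul_comm c] using isNilpotent_pow_sub_pow_of_modEq hq hc
  obtain ⟨y, hxy, hy⟩ := (existsUnique_pow_eq_of_isNilpotent_sub hb (hqu.pow c) happrox).exists
  refine ⟨y, ?_, hy⟩
  simpa using IsNilpotent.isUnit_add_left_of_commute hxy.neg (hqu.pow c) (Commute.all _ _)

end NilpotentRoots

theorem eq_one_or_eq_neg_one_of_pow_eq_one_of_coprime {L : Type*} [Field L] [Algebra ℚ L]
    {n : ℕ} [NeZero n] [IsCyclotomicExtension {n} ℚ L] {b : ℕ} (hb : 0 < b) (hbn : b.Coprime n)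
    {ω : L} (hω : ω ^ b = 1) : ω = 1 ∨ ω = -1 := by
  have := IsCyclotomicExtension.finite_of_singleton n ℚ L
  have hord : 0 < orderOf ω := (isOfFinOrder_iff_pow_eq_one.2 ⟨b, hb, hω⟩).orderOf_pos
  have hcop : (orderOf ω).Coprime n := hbn.coprime_dvd_left (orderOf_dvd_of_pow_eq_one hω)
  have hle := (IsPrimitiveRoot.orderOf ω).lcm_totient_le_finrank
    (IsCyclotomicExtension.zeta_spec n ℚ L)
    (cyclotomic.irreducible_rat (Nat.lcm_pos hord (NeZero.pos n)))
  rw [hcop.lcm_eq_mul, Nat.totient_mul hcop,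
    IsCyclotomicExtension.finrank L (cyclotomic.irreducible_rat (NeZero.pos n))] at hle
  have htot : (orderOf ω).totient ≤ 1 :=
    le_of_mul_le_mul_right (by simpa using hle) (Nat.totient_pos.2 (NeZero.pos n))
  exact sq_eq_one_iff.1 (orderOf_dvd_iff_pow_eq_one.1 (Nat.dvd_two_of_totient_le_one hord htot))

section RingHomToCyclotomicField

variable {A K : Type*} [CommRing A] [Field K]

theorem ne_neg_of_isUnit [CharZero K] (ρ : A →+* K) {y : A} (hy : IsUnit y) : y ≠ -y := fun h ↦
  (hy.map ρ).ne_zero (self_eq_neg.1 (by simpa using congrArg ρ h))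

variable [Algebra ℚ K] {n : ℕ} [NeZero n] [IsCyclotomicExtension {n} ℚ K]

theorem eq_or_eq_neg_and_even_of_pow_eq_pow (ρ : A →+* K) (hρ : ∀ a, ρ a = 0 → IsNilpotent a)
    {b : ℕ} (hb : 0 < b) (hbA : IsUnit (b : A)) (hbn : b.Coprime n) {y z : A} (hy : IsUnit y)
    (h : z ^ b = y ^ b) : z = y ∨ (z = -y ∧ Even b) := by
  have hρy : ρ y ≠ 0 := (hy.map ρ).ne_zero
  have hω : (ρ z / ρ y) ^ b = 1 := by
    rw [div_pow, ← map_pow, ← map_pow, h]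
    exact div_self (by simpa using pow_ne_zero b hρy)
  rcases eq_one_or_eq_neg_one_of_pow_eq_one_of_coprime hb hbn hω with hω1 | hω1
  · rw [div_eq_one_iff_eq hρy] at hω1
    have hnil : IsNilpotent (y - z) := hρ _ (by rw [map_sub, hω1, sub_self])
    exact Or.inl (eq_of_pow_eq_pow_of_isNilpotent_sub hbA hy hnil h)
  · have := charZero_of_injective_algebraMap (algebraMap ℚ K).injective
    have heven : Even b := by
      rw [← neg_one_pow_eq_one_iff_even (by norm_num : (-1 : K) ≠ 1), ← hω1, hω]
    rw [div_eq_iff hρy] at hω1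
    have hnil : IsNilpotent (-y - z) := hρ _ (by rw [map_sub, map_neg, hω1]; ring)
    exact Or.inr ⟨eq_of_pow_eq_pow_of_isNilpotent_sub hbA hy.neg hnil
      (h.trans (heven.neg_pow y).symm), heven⟩

end RingHomToCyclotomicField

theorem cyclotomic_dvd_of_eval₂_eq_zero {R K : Type*} [CommRing R] [Field K] [CharZero K]
    {e : R →+* ℚ} (he : Function.Injective e) {n : ℕ} [NeZero n] {ζ : K}
    (hζ : IsPrimitiveRoot ζ n) {F : R[X]} (hF : F.eval₂ ((algebraMap ℚ K).comp e) ζ = 0) :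
    cyclotomic n R ∣ F := by
  have hmin : minpoly ℚ ζ ∣ F.map e := minpoly.dvd ℚ ζ (by rwa [aeval_def, eval₂_map])
  rw [← cyclotomic_eq_minpoly_rat hζ (NeZero.pos n), ← map_cyclotomic n e] at hmin
  exact (map_dvd_map e he (cyclotomic.monic n R)).1 hmin

theorem exists_ringHom_quotient_cyclotomic_pow {R K : Type*} [CommRing R] [Field K] [CharZero K]
    {e : R →+* ℚ} (he : Function.Injective e) {n k : ℕ} [NeZero n] (hk : k ≠ 0) {ζ : K}
    (hζ : IsPrimitiveRoot ζ n) :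
    ∃ ρ : R[X] ⧸ Ideal.span {cyclotomic n R ^ k} →+* K,
      (∀ a, ρ a = 0 → IsNilpotent a) ∧
        ρ (Ideal.Quotient.mk (Ideal.span {cyclotomic n R ^ k}) X) = ζ := by
  set ψ := eval₂RingHom ((algebraMap ℚ K).comp e) ζ
  have hψ : ψ (cyclotomic n R) = 0 := by
    simpa [ψ, ← eval_map, map_cyclotomic] using hζ.isRoot_cyclotomic (NeZero.pos n)
  refine ⟨Ideal.Quotient.lift _ ψ fun a ha ↦ ?_, fun a ha ↦ ?_, by simp [ψ]⟩
  · obtain ⟨c, rfl⟩ := Ideal.mem_span_singleton.1 ha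
    simp [hψ, hk]
  · obtain ⟨F, rfl⟩ := Ideal.Quotient.mk_surjective a
    refine ⟨k, ?_⟩
    rw [← map_pow, Ideal.Quotient.eq_zero_iff_mem, Ideal.mem_span_singleton]
    exact pow_dvd_pow_of_dvd (cyclotomic_dvd_of_eval₂_eq_zero he hζ ha) k

theorem exists_injective_ringHom_rat_of_isLocalization_away {b : ℕ} (hb : b ≠ 0) (R : Type*)
    [CommRing R] [IsLocalization.Away (b : ℤ) R] : ∃ e : R →+* ℚ, Function.Injective e := by
  refine ⟨IsLocalization.Away.lift (b : ℤ) (g := Int.castRingHom ℚ) (by simpa using hb),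
    IsLocalization.injective_of_map_algebraMap_zero (M := Submonoid.powers (b : ℤ)) R _
      fun x hx ↦ ?_⟩
  rw [IsLocalization.Away.lift_eq] at hx
  simp_all

/-- Let `b` and `n` be coprime positive integers, `k` positive, and
`A = ℤ[1/b][q]/(Φ_n(q)^k)` with `q̄` the image of `q`.  If `b` is odd then `A` contains a
unique `b`-th root of `q̄`, which is invertible; if `b` is even then `A` contains exactly two
`b`-th roots of `q̄`, one the negative of the other, both invertible.
Here `R` is the localization `ℤ[1/b]` of `ℤ` away from `b`. -/
theorem stmt11 (b n k : ℕ) (hb : 0 < b) (hn : 0 < n) (hk : 0 < k) (hbn : Nat.Coprime b n)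
    (R : Type*) [CommRing R] [IsLocalization.Away ((b : ℤ)) R] :
    (Odd b →
      ∃ y : Polynomial R ⧸ Ideal.span {cyclotomic n R ^ k},
        y ^ b = Ideal.Quotient.mk (Ideal.span {cyclotomic n R ^ k}) X ∧ IsUnit y ∧
        ∀ z : Polynomial R ⧸ Ideal.span {cyclotomic n R ^ k},
          z ^ b = Ideal.Quotient.mk (Ideal.span {cyclotomic n R ^ k}) X → z = y) ∧
    (Even b →
      ∃ y : Polynomial R ⧸ Ideal.span {cyclotomic n R ^ k},
        y ^ b = Ideal.Quotient.mk (Ideal.span {cyclotomic n R ^ k}) X ∧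
        (-y) ^ b = Ideal.Quotient.mk (Ideal.span {cyclotomic n R ^ k}) X ∧
        y ≠ -y ∧ IsUnit y ∧ IsUnit (-y) ∧
        ∀ z : Polynomial R ⧸ Ideal.span {cyclotomic n R ^ k},
          z ^ b = Ideal.Quotient.mk (Ideal.span {cyclotomic n R ^ k}) X → z = y ∨ z = -y) := by
  have : NeZero n := ⟨hn.ne'⟩
  -- `CyclotomicField n ℚ` has its own `ℚ`-algebra structure, and the `IsCyclotomicExtension`
  -- instance is stated for it, not for `DivisionRing.toRatAlgebra`.
  let : Algebra ℚ (CyclotomicField n ℚ) := CyclotomicField.algebra n ℚ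
  have hbA : IsUnit (b : R[X] ⧸ Ideal.span {cyclotomic n R ^ k}) := by
    simpa using (IsLocalization.Away.algebraMap_isUnit (b : ℤ) : IsUnit (algebraMap ℤ R b)).map
      (algebraMap R (R[X] ⧸ Ideal.span {cyclotomic n R ^ k}))
  obtain ⟨e, he⟩ := exists_injective_ringHom_rat_of_isLocalization_away hb.ne' R
  have hζ := IsCyclotomicExtension.zeta_spec n ℚ (CyclotomicField n ℚ)
  obtain ⟨ρ, hρ, hq⟩ := exists_ringHom_quotient_cyclotomic_pow he hk.ne' hζ
  obtain ⟨y, hyu, hy⟩ := exists_isUnit_pow_eq_of_isNilpotent_pow_sub_one hbA hbn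
    (hρ _ (by rw [map_sub, map_pow, hq, hζ.pow_eq_one, map_one, sub_self]))
  have hroots := fun z (hz : z ^ b = _) ↦
    eq_or_eq_neg_and_even_of_pow_eq_pow ρ hρ hb hbA hbn hyu (hz.trans hy.symm)
  refine ⟨fun hodd ↦ ⟨y, hy, hyu, fun z hz ↦ ?_⟩,
    fun heven ↦ ⟨y, hy, (heven.neg_pow y).trans hy, ne_neg_of_isUnit ρ hyu, hyu, hyu.neg,
      fun z hz ↦ (hroots z hz).imp_right And.left⟩⟩
  rcases hroots z hz with h | ⟨-, heven⟩
  · exact h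
  · exact absurd hodd (Nat.not_odd_iff_even.2 heven)
end

section
/- Let r be an odd positive integer, let ξ ∈ ℂ be a primitive r-th root of unity, let b be a nonzero integer, and let a be any integer. Set c := gcd(b, r) (taken positive), b' := b/c, r' := r/c, and let b'_* be an integer with b'·b'_* ≡ 1 (mod r'). Then the sum Σ over odd integers n with 0 < n < 2r of ξ^{b(n²−1)/4 + n·a} equals 0 if c does not divide a, and equals (ξ^c)^{−a₁²·b'_*}·γ_b(ξ) if a = c·a₁ for an integer a₁, where γ_b(ξ) := Σ over odd integers n with 0 < n < 2r of ξ^{b(n²−1)/4}. (Note that 4 divides n²−1 for odd n, so all exponents of ξ are integers.) -/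
/-!
Substituting `n = 2k + 1` turns the exponent into `b k (k + 1) + (2k + 1) a`, and since `ξ ^ r = 1`
the sum becomes `∑ x : ZMod r, ψ (b x (x + 1) + (2x + 1) a)` for the additive character
`ψ x = ξ ^ x` of `ZMod r`. Translating `x ↦ x + t` multiplies each term by `ψ (2 t a)` as soon as
`b t = 0`; for `t = r'` this factor is `≠ 1` unless `c ∣ a`, so the sum vanishes. If `a = c a₁`,
then `s = b'_* a₁` satisfies `b s = a` in `ZMod r`, and completing the square, i.e. translating by
`s`, pulls out the constant `ψ (-a s) = (ξ ^ c) ^ (-a₁² b'_*)`.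
-/

open Finset

section QuadraticCharacterSum

variable {R M : Type*} [CommRing R] [Fintype R] [CommRing M] (ψ : AddChar R M)

theorem sum_addChar_quadratic_eq_zero [IsDomain M] {b a t : R} (hbt : b * t = 0)
    (hψ : ψ (2 * t * a) ≠ 1) :
    ∑ x, ψ (b * x * (x + 1) + (2 * x + 1) * a) = 0 := by
  set S := ∑ x, ψ (b * x * (x + 1) + (2 * x + 1) * a) with hS
  have hshift : S = ψ (2 * t * a) * S := by
    conv_lhs => rw [hS, ← Equiv.sum_comp (Equiv.addRight t)]
    rw [mul_sum]
    refine sum_congr rfl fun x _ => ?_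
    rw [← AddChar.map_add_eq_mul, Equiv.coe_addRight]
    congr 1
    linear_combination (2 * x + t + 1) * hbt
  have hfactor : (ψ (2 * t * a) - 1) * S = 0 := by linear_combination -hshift
  exact (mul_eq_zero.mp hfactor).resolve_left (sub_ne_zero.mpr hψ)

theorem sum_addChar_quadratic_eq {b a s : R} (hbs : b * s = a) :
    ∑ x, ψ (b * x * (x + 1) + (2 * x + 1) * a) = ψ (-(a * s)) * ∑ x, ψ (b * x * (x + 1)) := by
  conv_rhs => rw [← Equiv.sum_comp (Equiv.addRight s), mul_sum]
  refine sum_congr rfl fun x _ => ?_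
  rw [← AddChar.map_add_eq_mul, Equiv.coe_addRight]
  congr 1
  linear_combination -(2 * x + 1 + s) * hbs

end QuadraticCharacterSum

theorem ZMod.sum_range_natCast {M : Type*} [AddCommMonoid M] (n : ℕ) [NeZero n]
    (f : ZMod n → M) : ∑ k ∈ range n, f k = ∑ x, f x := by
  refine sum_nbij' (fun k => (k : ZMod n)) ZMod.val ?_ ?_ ?_ ?_ ?_ <;> simp [ZMod.val_lt]
  exact fun k hk => Nat.mod_eq_of_lt hk

theorem AddChar.zmodChar_intCast {C : Type*} [DivisionCommMonoid C] {n : ℕ} [NeZero n] {ζ : C}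
    (hζ : ζ ^ n = 1) (m : ℤ) : zmodChar n hζ m = ζ ^ m := by
  have hm : (m : ZMod n) = m • ((1 : ℕ) : ZMod n) := by simp
  rw [hm, AddChar.map_zsmul_eq_zpow, AddChar.zmodChar_apply', pow_one]

theorem sum_filter_odd_Ico_eq_sum_range {M : Type*} [AddCommMonoid M] (r : ℕ) (f : ℕ → M) :
    ∑ n ∈ (Ico 1 (2 * r)).filter (fun n => Odd n), f n = ∑ k ∈ range r, f (2 * k + 1) := by
  have himage : (Ico 1 (2 * r)).filter (fun n => Odd n) = (range r).image (fun k => 2 * k + 1) := by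
    ext n
    simp only [mem_filter, mem_Ico, mem_image, mem_range, Nat.odd_iff]
    constructor
    · rintro ⟨⟨-, hn⟩, hodd⟩
      exact ⟨n / 2, by omega, by omega⟩
    · rintro ⟨k, hk, rfl⟩
      omega
  rw [himage, sum_image]
  intro x _ y _ h
  simp only at h
  omega

theorem sum_filter_odd_zpow_eq_sum_zmodChar {K : Type*} [Field K] {r : ℕ} [NeZero r] {ξ : K}
    (hξ : ξ ^ r = 1) (b a : ℤ) :
    ∑ n ∈ (Ico 1 (2 * r)).filter (fun n => Odd n), ξ ^ ((b * ((n : ℤ) ^ 2 - 1)) / 4 + (n : ℤ) * a)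
      = ∑ x : ZMod r, AddChar.zmodChar r hξ (b * x * (x + 1) + (2 * x + 1) * a) := by
  rw [sum_filter_odd_Ico_eq_sum_range, ← ZMod.sum_range_natCast]
  refine sum_congr rfl fun k _ => ?_
  have hquarter : b * (((2 * k + 1 : ℕ) : ℤ) ^ 2 - 1) = 4 * (b * k * (k + 1)) := by
    push_cast
    ring
  rw [hquarter, Int.mul_ediv_cancel_left _ four_ne_zero, ← AddChar.zmodChar_intCast hξ]
  congr 1
  push_cast
  ring

theorem not_dvd_two_mul_of_odd_of_not_dvd {r c r' : ℕ} (hrodd : Odd r) (hr' : r = c * r') {a : ℤ}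
    (hca : ¬ (c : ℤ) ∣ a) : ¬ (r : ℤ) ∣ 2 * (r' * a) := by
  intro hdvd
  have hcop : IsCoprime (r : ℤ) 2 := Nat.isCoprime_iff_coprime.2 (Nat.coprime_two_right.2 hrodd)
  have hr'0 : (r' : ℤ) ≠ 0 := by
    have := hrodd.pos.ne'
    rw [hr'] at this
    exact_mod_cast right_ne_zero_of_mul this
  apply hca
  rw [← mul_dvd_mul_iff_right hr'0, mul_comm a]
  exact_mod_cast hr' ▸ hcop.dvd_of_dvd_mul_left hdvd

theorem stmt12_general (r : ℕ) (hrodd : Odd r)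
    (ξ : ℂ) (hξ : IsPrimitiveRoot ξ r)
    (b : ℤ) (a : ℤ)
    (c : ℕ)
    (b' : ℤ) (hb' : b = (c : ℤ) * b')
    (r' : ℕ) (hr' : r = c * r')
    (bs : ℤ) (hbs : b' * bs ≡ 1 [ZMOD (r' : ℤ)]) :
    (¬ (c : ℤ) ∣ a →
      ∑ n ∈ (Finset.Ico 1 (2 * r)).filter (fun n => Odd n),
          ξ ^ ((b * ((n : ℤ) ^ 2 - 1)) / 4 + (n : ℤ) * a) = 0) ∧
    (∀ a₁ : ℤ, a = (c : ℤ) * a₁ →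
      ∑ n ∈ (Finset.Ico 1 (2 * r)).filter (fun n => Odd n),
          ξ ^ ((b * ((n : ℤ) ^ 2 - 1)) / 4 + (n : ℤ) * a) =
        (ξ ^ (c : ℕ)) ^ (-(a₁ ^ 2) * bs) *
          ∑ n ∈ (Finset.Ico 1 (2 * r)).filter (fun n => Odd n),
            ξ ^ ((b * ((n : ℤ) ^ 2 - 1)) / 4)) := by
  have : NeZero r := ⟨hrodd.pos.ne'⟩
  have hγ := sum_filter_odd_zpow_eq_sum_zmodChar hξ.pow_eq_one b 0
  simp only [mul_zero, add_zero, Int.cast_zero] at hγ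
  rw [sum_filter_odd_zpow_eq_sum_zmodChar hξ.pow_eq_one, hγ]
  refine ⟨fun hca => sum_addChar_quadratic_eq_zero _ (t := (r' : ZMod r)) ?_ ?_, fun a₁ ha => ?_⟩
  · have hdvd : ((b * r' : ℤ) : ZMod r) = 0 :=
      (ZMod.intCast_zmod_eq_zero_iff_dvd _ _).2 ⟨b', by rw [hb', hr']; push_cast; ring⟩
    exact_mod_cast hdvd
  · rw [ne_eq, (AddChar.zmodChar_primitive_of_primitive_root r hξ).zmod_char_eq_one_iff]
    intro h
    refine not_dvd_two_mul_of_odd_of_not_dvd hrodd hr' hca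
      ((ZMod.intCast_zmod_eq_zero_iff_dvd _ _).1 ?_)
    push_cast
    rwa [← mul_assoc]
  · obtain ⟨q, hq⟩ := hbs.dvd
    have hsolve : ((b * (bs * a₁) : ℤ) : ZMod r) = a :=
      (ZMod.intCast_eq_intCast_iff_dvd_sub _ _ _).2
        ⟨a₁ * q, by rw [ha, hb', hr']; push_cast; linear_combination (c * a₁ : ℤ) * hq⟩
    rw [sum_addChar_quadratic_eq _ (s := ((bs * a₁ : ℤ) : ZMod r)) (by exact_mod_cast hsolve),
      ← zpow_natCast, ← zpow_mul, ← AddChar.zmodChar_intCast hξ.pow_eq_one]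
    congr 2
    rw [ha]
    push_cast
    ring

/-- Evaluation of the twisted Gauss sum: for a primitive `r`-th root of unity `ξ` (`r` odd),
`b ≠ 0`, `c = gcd(b,r)`, `b = c·b'`, `r = c·r'` and `b'·b'_* ≡ 1 (mod r')`, the sum
`∑_{n odd, 0<n<2r} ξ^{b(n²-1)/4 + n·a}` vanishes unless `c ∣ a`, and equals
`(ξ^c)^{-a₁²·b'_*}·γ_b(ξ)` when `a = c·a₁`, where `γ_b(ξ) = ∑_{n odd, 0<n<2r} ξ^{b(n²-1)/4}`. -/
theorem stmt12 (r : ℕ) (hrpos : 0 < r) (hrodd : Odd r)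
    (ξ : ℂ) (hξ : IsPrimitiveRoot ξ r)
    (b : ℤ) (hb : b ≠ 0) (a : ℤ)
    (c : ℕ) (hc : (c : ℤ) = Int.gcd b (r : ℤ))
    (b' : ℤ) (hb' : b = (c : ℤ) * b')
    (r' : ℕ) (hr' : r = c * r')
    (bs : ℤ) (hbs : b' * bs ≡ 1 [ZMOD (r' : ℤ)]) :
    (¬ (c : ℤ) ∣ a →
      ∑ n ∈ (Finset.Ico 1 (2 * r)).filter (fun n => Odd n),
          ξ ^ ((b * ((n : ℤ) ^ 2 - 1)) / 4 + (n : ℤ) * a) = 0) ∧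
    (∀ a₁ : ℤ, a = (c : ℤ) * a₁ →
      ∑ n ∈ (Finset.Ico 1 (2 * r)).filter (fun n => Odd n),
          ξ ^ ((b * ((n : ℤ) ^ 2 - 1)) / 4 + (n : ℤ) * a) =
        (ξ ^ (c : ℕ)) ^ (-(a₁ ^ 2) * bs) *
          ∑ n ∈ (Finset.Ico 1 (2 * r)).filter (fun n => Odd n),
            ξ ^ ((b * ((n : ℤ) ^ 2 - 1)) / 4)) :=
  stmt12_general r hrodd ξ hξ b a c b' hb' r' hr' bs hbs
end

section
/- Let r be an odd positive integer, let ξ ∈ ℂ be a primitive r-th root of unity, and let b be a nonzero integer. Set γ_b(ξ) := Σ over odd integers n with 0 < n < 2r of ξ^{b(n²−1)/4}. Then Σ over odd integers n with 0 < n < 2r of ξ^{b(n²−1)/4}·(ξ^n + ξ^{−n} − 2) equals 2·(ξ^{−b_*} − 1)·γ_b(ξ) if gcd(b, r) = 1, where b_* is an integer with b·b_* ≡ 1 (mod r), and equals −2·γ_b(ξ) if gcd(b, r) > 1. -/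
/-!
Write `n = 2x + 1`, so that `(n² - 1)/4 = x(x + 1)`, and view the sums as sums over `x ∈ ZMod r`
of the additive character `ψ(a) = ξ^a`. With `f(x) = b x (x + 1)`, the sum becomes
`A + A' - 2γ`, where `A = ∑ ψ(f(x) + 2x + 1)` and `A' = ∑ ψ(f(x) - 2x - 1)`; the substitution
`x ↦ -1 - x` shows `A' = A`. If `b b_* = 1` in `ZMod r`, then `f(x + b_*) = f(x) + 2x + 1 + b_*`,
so shifting by `b_*` gives `A = ψ(-b_*) γ`. If `gcd(b, r) > 1`, then `b m = 0` for some `m ≠ 0`,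
and shifting by `m` gives `A = ψ(2m) A` with `ψ(2m) ≠ 1` as `r` is odd, so `A = 0`.
-/

open Finset

theorem IsPrimitiveRoot.zpow_eq_zmodChar {G₀ : Type*} [CommGroupWithZero G₀] {ξ : G₀} {r : ℕ}
    [NeZero r] (hξ : IsPrimitiveRoot ξ r) (a : ℤ) :
    ξ ^ a = AddChar.zmodChar r hξ.pow_eq_one (a : ZMod r) := by
  rw [AddChar.zmodChar_apply, ← zpow_natCast, ZMod.val_intCast]
  conv_lhs => rw [← Int.emod_add_mul_ediv a r]
  rw [zpow_add₀ (hξ.ne_zero (NeZero.ne r)), zpow_mul, zpow_natCast, hξ.pow_eq_one, one_zpow,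
    mul_one]

theorem sum_filter_odd_Ico_eq_sum_zmod {M : Type*} [AddCommMonoid M] (r : ℕ) [NeZero r]
    (g : ℕ → M) :
    ∑ n ∈ (Ico 1 (2 * r)).filter (fun n => Odd n), g n = ∑ x : ZMod r, g (2 * x.val + 1) := by
  symm
  refine sum_nbij' (fun x => 2 * x.val + 1) (fun n => (((n - 1) / 2 : ℕ) : ZMod r))
    ?_ ?_ ?_ ?_ fun _ _ => rfl
  · intro x _
    simp only [mem_filter, mem_Ico]
    exact ⟨⟨by omega, by linarith [x.val_lt]⟩, x.val, rfl⟩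
  · intro n _
    exact mem_coe.2 (mem_univ _)
  · intro x _
    simp
  · rintro n hn
    simp only [mem_filter, mem_Ico] at hn
    obtain ⟨⟨-, hn⟩, k, rfl⟩ := hn
    simp only [Nat.add_sub_cancel, Nat.mul_div_cancel_left _ two_pos]
    rw [ZMod.val_cast_of_lt (by omega)]

namespace AddChar

variable {R M : Type*} [CommRing R] [Fintype R] [CommRing M] (ψ : AddChar R M) (β : R)

theorem sum_pronic_sub_odd :
    ∑ x, ψ (β * x * (x + 1) - (2 * x + 1)) = ∑ x, ψ (β * x * (x + 1) + (2 * x + 1)) := by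
  rw [← Equiv.sum_comp (Equiv.subLeft (-1 : R))]
  refine sum_congr rfl fun x _ => ?_
  simp only [Equiv.subLeft_apply]
  ring_nf

theorem sum_pronic_mul_add_neg_sub_two :
    ∑ x, ψ (β * x * (x + 1)) * (ψ (2 * x + 1) + ψ (-(2 * x + 1)) - 2) =
      2 * (∑ x, ψ (β * x * (x + 1) + (2 * x + 1)) - ∑ x, ψ (β * x * (x + 1))) := by
  have hterm : ∀ x, ψ (β * x * (x + 1)) * (ψ (2 * x + 1) + ψ (-(2 * x + 1)) - 2) =
      ψ (β * x * (x + 1) + (2 * x + 1)) + ψ (β * x * (x + 1) - (2 * x + 1)) -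
        2 * ψ (β * x * (x + 1)) := fun x => by
    rw [sub_eq_add_neg _ (2 * x + 1), map_add_eq_mul ψ (β * x * (x + 1)),
      map_add_eq_mul ψ (β * x * (x + 1))]
    ring
  simp only [hterm, sum_sub_distrib, sum_add_distrib, sum_pronic_sub_odd, ← mul_sum]
  ring

theorem sum_pronic_add_odd_of_mul_eq_one {c : R} (h : β * c = 1) :
    ∑ x, ψ (β * x * (x + 1) + (2 * x + 1)) = ψ (-c) * ∑ x, ψ (β * x * (x + 1)) := by
  rw [mul_sum, ← Equiv.sum_comp (Equiv.addRight c) (fun x => ψ (-c) * ψ (β * x * (x + 1)))]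
  refine sum_congr rfl fun x _ => ?_
  rw [← map_add_eq_mul, Equiv.coe_addRight]
  congr 1
  linear_combination (-(2 * x + 1 + c)) * h

theorem sum_pronic_add_odd_eq_zero_of_mul_eq_zero [IsDomain M] {m : R} (h : β * m = 0)
    (hm : ψ (2 * m) ≠ 1) : ∑ x, ψ (β * x * (x + 1) + (2 * x + 1)) = 0 := by
  have hshift : ∑ x, ψ (β * x * (x + 1) + (2 * x + 1)) =
      ψ (2 * m) * ∑ x, ψ (β * x * (x + 1) + (2 * x + 1)) := by
    rw [mul_sum, ← Equiv.sum_comp (Equiv.addRight m)]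
    refine sum_congr rfl fun x _ => ?_
    rw [← map_add_eq_mul, Equiv.coe_addRight]
    congr 1
    linear_combination (2 * x + 1 + m) * h
  exact (mul_left_eq_self₀.1 hshift.symm).resolve_left hm

end AddChar

theorem Int.mul_sq_odd_sub_one_ediv_four (b : ℤ) (k : ℕ) :
    b * (((2 * k + 1 : ℕ) : ℤ) ^ 2 - 1) / 4 = b * k * (k + 1) := by
  rw [show b * (((2 * k + 1 : ℕ) : ℤ) ^ 2 - 1) = 4 * (b * k * (k + 1)) by push_cast; ring,
    Int.mul_ediv_cancel_left _ four_ne_zero]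

theorem ZMod.exists_mul_intCast_eq_zero_of_one_lt_gcd {r : ℕ} [NeZero r] {b : ℤ}
    (h : 1 < Int.gcd b r) : ∃ m : ZMod r, m ≠ 0 ∧ (b : ZMod r) * m = 0 := by
  have hb : ¬IsUnit (b : ZMod r) := by
    rw [ZMod.coe_int_isUnit_iff_isCoprime, Int.isCoprime_iff_gcd_eq_one, Int.gcd_comm]
    exact h.ne'
  rw [isUnit_iff_mem_nonZeroDivisors_of_finite, notMem_nonZeroDivisors_iff_left] at hb
  obtain ⟨m, hm, hm0⟩ := hb
  exact ⟨m, hm0, hm⟩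

theorem stmt14_general (r : ℕ) (hrodd : Odd r)
    (ξ : ℂ) (hξ : IsPrimitiveRoot ξ r) (b : ℤ) :
    (∀ bs : ℤ, Int.gcd b (r : ℤ) = 1 → b * bs ≡ 1 [ZMOD (r : ℤ)] →
      ∑ n ∈ (Finset.Ico 1 (2 * r)).filter (fun n => Odd n),
          ξ ^ ((b * ((n : ℤ) ^ 2 - 1)) / 4) * (ξ ^ (n : ℤ) + ξ ^ (-(n : ℤ)) - 2) =
        2 * (ξ ^ (-bs) - 1) *
          ∑ n ∈ (Finset.Ico 1 (2 * r)).filter (fun n => Odd n),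
            ξ ^ ((b * ((n : ℤ) ^ 2 - 1)) / 4)) ∧
    (1 < Int.gcd b (r : ℤ) →
      ∑ n ∈ (Finset.Ico 1 (2 * r)).filter (fun n => Odd n),
          ξ ^ ((b * ((n : ℤ) ^ 2 - 1)) / 4) * (ξ ^ (n : ℤ) + ξ ^ (-(n : ℤ)) - 2) =
        -2 *
          ∑ n ∈ (Finset.Ico 1 (2 * r)).filter (fun n => Odd n),
            ξ ^ ((b * ((n : ℤ) ^ 2 - 1)) / 4)) := by
  have : NeZero r := ⟨hrodd.pos.ne'⟩
  set ψ := AddChar.zmodChar r hξ.pow_eq_one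
  have hψ (a : ℤ) : ξ ^ a = ψ a := hξ.zpow_eq_zmodChar a
  have hpronic (x : ZMod r) :
      ξ ^ (b * (((2 * x.val + 1 : ℕ) : ℤ) ^ 2 - 1) / 4) = ψ (b * x * (x + 1)) := by
    rw [Int.mul_sq_odd_sub_one_ediv_four, hψ]
    simp
  have hodd (x : ZMod r) : ξ ^ ((2 * x.val + 1 : ℕ) : ℤ) = ψ (2 * x + 1) := by
    rw [hψ]
    simp
  have hγ : ∑ n ∈ (Ico 1 (2 * r)).filter (fun n => Odd n), ξ ^ ((b * ((n : ℤ) ^ 2 - 1)) / 4) =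
      ∑ x, ψ (b * x * (x + 1)) := by
    simp only [sum_filter_odd_Ico_eq_sum_zmod, hpronic]
  have hS : ∑ n ∈ (Ico 1 (2 * r)).filter (fun n => Odd n),
      ξ ^ ((b * ((n : ℤ) ^ 2 - 1)) / 4) * (ξ ^ (n : ℤ) + ξ ^ (-(n : ℤ)) - 2) =
      ∑ x, ψ (b * x * (x + 1)) * (ψ (2 * x + 1) + ψ (-(2 * x + 1)) - 2) := by
    simp only [sum_filter_odd_Ico_eq_sum_zmod, hpronic, zpow_neg, hodd, AddChar.map_neg_eq_inv]
  rw [hS, hγ, AddChar.sum_pronic_mul_add_neg_sub_two]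
  refine ⟨fun bs _ hbs => ?_, fun hgcd => ?_⟩
  · have hbs' : (b : ZMod r) * bs = 1 := by
      exact_mod_cast (ZMod.intCast_eq_intCast_iff _ _ _).2 hbs
    rw [AddChar.sum_pronic_add_odd_of_mul_eq_one ψ _ hbs', hψ, Int.cast_neg]
    ring
  · obtain ⟨m, hm0, hm⟩ := ZMod.exists_mul_intCast_eq_zero_of_one_lt_gcd hgcd
    have h2m : ψ (2 * m) ≠ 1 := by
      have hψprim : ψ.IsPrimitive := AddChar.zmodChar_primitive_of_primitive_root r hξ
      have h2 : IsUnit (2 : ZMod r) := by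
        exact_mod_cast (ZMod.isUnit_iff_coprime 2 r).2 (Nat.coprime_two_left.2 hrodd)
      rwa [Ne, hψprim.zmod_char_eq_one_iff, h2.mul_right_eq_zero]
    rw [AddChar.sum_pronic_add_odd_eq_zero_of_mul_eq_zero ψ _ hm h2m]
    ring

/-- For `ξ` a primitive `r`-th root of unity with `r` odd and `b ≠ 0`, with
`γ_b(ξ) = ∑_{n odd, 0<n<2r} ξ^{b(n²-1)/4}`, the sum
`∑_{n odd, 0<n<2r} ξ^{b(n²-1)/4}(ξ^n + ξ^{-n} - 2)` equals `2(ξ^{-b_*}-1)γ_b(ξ)` when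
`gcd(b,r) = 1` (where `b·b_* ≡ 1 (mod r)`), and equals `-2·γ_b(ξ)` when `gcd(b,r) > 1`. -/
theorem stmt14 (r : ℕ) (hrpos : 0 < r) (hrodd : Odd r)
    (ξ : ℂ) (hξ : IsPrimitiveRoot ξ r) (b : ℤ) (hb : b ≠ 0) :
    (∀ bs : ℤ, Int.gcd b (r : ℤ) = 1 → b * bs ≡ 1 [ZMOD (r : ℤ)] →
      ∑ n ∈ (Finset.Ico 1 (2 * r)).filter (fun n => Odd n),
          ξ ^ ((b * ((n : ℤ) ^ 2 - 1)) / 4) * (ξ ^ (n : ℤ) + ξ ^ (-(n : ℤ)) - 2) =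
        2 * (ξ ^ (-bs) - 1) *
          ∑ n ∈ (Finset.Ico 1 (2 * r)).filter (fun n => Odd n),
            ξ ^ ((b * ((n : ℤ) ^ 2 - 1)) / 4)) ∧
    (1 < Int.gcd b (r : ℤ) →
      ∑ n ∈ (Finset.Ico 1 (2 * r)).filter (fun n => Odd n),
          ξ ^ ((b * ((n : ℤ) ^ 2 - 1)) / 4) * (ξ ^ (n : ℤ) + ξ ^ (-(n : ℤ)) - 2) =
        -2 *
          ∑ n ∈ (Finset.Ico 1 (2 * r)).filter (fun n => Odd n),
            ξ ^ ((b * ((n : ℤ) ^ 2 - 1)) / 4)) :=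
  stmt14_general r hrodd ξ hξ b
end

section
/- Let p be a prime, l a positive integer, b := p^l, and let a be an integer coprime to b. Then 3·(s(1,b) − s(a,b)) ∈ (1/b)·ℤ and 3·(s(1,b) + s(a,b)) ∈ (1/b)·ℤ; that is, both 3b·(s(1,b) − s(a,b)) and 3b·(s(1,b) + s(a,b)) are integers. -/
/-!
The sawtooth function is odd and 1-periodic, so pairing `k` with `b - k` gives
`∑ₖ ((ka/b)) = 0`; hence the factor `((k/b)) = k/b - 1/2` of the Dedekind sum may be replaced by
`k/b`. For `a` prime to `b` every `ka/b` is a non-integer, and writing `rₖ = ka mod b` this yields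
`2b² s(a,b) = 2 ∑ k rₖ - b ∑ k`. Modulo `b`, `∑ k rₖ ≡ a ∑ k²`, so `3b (s(1,b) ± s(a,b))` is an
integer once `b` divides `3(1 ± a) ∑ k² = (1 ± a)(b-1)b(2b-1)/2`, which holds because `b` is odd
or else `a` is odd.
-/

/-- The sawtooth function `((x))`: zero on integers, `x - ⌊x⌋ - 1/2` otherwise. -/
noncomputable def sawtooth (x : ℝ) : ℝ :=
  if (⌊x⌋ : ℝ) = x then 0 else x - ⌊x⌋ - 1 / 2

/-- The Dedekind sum `s(a,b) = ∑_{k=1}^{b-1} ((k/b))·((ka/b))`. -/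
noncomputable def dedekindSum (a : ℤ) (b : ℕ) : ℝ :=
  ∑ k ∈ Finset.Icc 1 (b - 1), sawtooth ((k : ℝ) / b) * sawtooth ((k : ℝ) * a / b)

open Finset

theorem sawtooth_eq_fract (x : ℝ) :
    sawtooth x = if Int.fract x = 0 then 0 else Int.fract x - 1 / 2 := by
  simp only [sawtooth, Int.fract, sub_eq_zero, eq_comm (a := x)]

theorem sawtooth_neg (x : ℝ) : sawtooth (-x) = -sawtooth x := by
  simp only [sawtooth_eq_fract, Int.fract_neg_eq_zero]
  split_ifs with hx
  · simp
  · rw [Int.fract_neg hx]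
    ring

theorem sawtooth_add_intCast (x : ℝ) (n : ℤ) : sawtooth (x + n) = sawtooth x := by
  simp only [sawtooth_eq_fract, Int.fract_add_intCast]

theorem sawtooth_intCast_div {x : ℤ} {b : ℕ} (hb : b ≠ 0) (h : ¬ (b : ℤ) ∣ x) :
    sawtooth (x / b) = (x % b : ℤ) / b - 1 / 2 := by
  rw [sawtooth_eq_fract, Int.fract_div_intCast_eq_div_intCast_mod, if_neg]
  rwa [div_eq_zero_iff, or_iff_left (Nat.cast_ne_zero.2 hb), Int.cast_eq_zero,
    ← Int.dvd_iff_emod_eq_zero]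

theorem sum_Icc_reflect {M : Type*} [AddCommMonoid M] (f : ℕ → M) (b : ℕ) :
    ∑ k ∈ Icc 1 (b - 1), f (b - k) = ∑ k ∈ Icc 1 (b - 1), f k := by
  refine sum_nbij' (b - ·) (b - ·) ?_ ?_ ?_ ?_ ?_ <;> intros <;> simp_all <;> omega

theorem sum_sawtooth_mul_div_eq_zero (a : ℤ) (b : ℕ) :
    ∑ k ∈ Icc 1 (b - 1), sawtooth ((k : ℝ) * a / b) = 0 := by
  have hodd : ∑ k ∈ Icc 1 (b - 1), sawtooth (((b - k : ℕ) : ℝ) * a / b)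
      = -∑ k ∈ Icc 1 (b - 1), sawtooth ((k : ℝ) * a / b) := by
    rw [← sum_neg_distrib]
    refine sum_congr rfl fun k hk => ?_
    have hk' := mem_Icc.1 hk
    have hkb : k ≤ b := by omega
    have hb : (b : ℝ) ≠ 0 := Nat.cast_ne_zero.2 (by omega)
    rw [← sawtooth_neg, ← sawtooth_add_intCast _ (-a)]
    congr 1
    push_cast [hkb]
    field_simp
    ring
  rw [sum_Icc_reflect (fun k => sawtooth ((k : ℝ) * a / b))] at hodd
  linarith

def mulModSum (a : ℤ) (b : ℕ) : ℤ :=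
  ∑ k ∈ Icc 1 (b - 1), (k : ℤ) * (k * a % b)

theorem mulModSum_modEq (a : ℤ) (b : ℕ) :
    mulModSum a b ≡ a * ∑ k ∈ Icc 1 (b - 1), (k : ℤ) ^ 2 [ZMOD b] := by
  rw [mulModSum, mul_sum]
  refine Int.ModEq.sum fun k _ => ?_
  calc (k : ℤ) * (k * a % b) ≡ k * (k * a) [ZMOD b] := (Int.mod_modEq _ _).mul_left _
    _ = a * k ^ 2 := by ring

theorem six_mul_sum_Icc_sq (n : ℕ) :
    6 * ∑ k ∈ Icc 1 n, (k : ℤ) ^ 2 = n * (n + 1) * (2 * n + 1) := by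
  induction n with
  | zero => simp
  | succ n ih =>
    rw [sum_Icc_succ_top (by omega)]
    push_cast
    linear_combination ih

theorem dvd_three_mul_mul_sum_Icc_sq {b : ℕ} {c : ℤ} (h : Odd b ∨ Even c) :
    (b : ℤ) ∣ 3 * c * ∑ k ∈ Icc 1 (b - 1), (k : ℤ) ^ 2 := by
  rcases h with ⟨j, rfl⟩ | ⟨i, rfl⟩
  · have h6 := six_mul_sum_Icc_sq (2 * j)
    simp only [add_tsub_cancel_right]
    push_cast at h6 ⊢
    have h3 : 3 * ∑ k ∈ Icc 1 (2 * j), (k : ℤ) ^ 2 = j * (2 * j + 1) * (4 * j + 1) := by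
      linarith
    exact ⟨c * j * (4 * j + 1), by linear_combination c * h3⟩
  · rcases Nat.eq_zero_or_pos b with rfl | hb
    · simp
    have h6 := six_mul_sum_Icc_sq (b - 1)
    push_cast [Nat.one_le_of_lt hb] at h6
    exact ⟨i * (b - 1) * (2 * b - 1), by linear_combination i * h6⟩

section

variable {a c : ℤ} {b k : ℕ}

theorem not_dvd_mul_of_gcd_eq_one (hab : Int.gcd a b = 1) (hk : k ∈ Icc 1 (b - 1)) :
    ¬ (b : ℤ) ∣ k * a := by
  have hcop : IsCoprime (b : ℤ) a := Int.isCoprime_iff_gcd_eq_one.2 (by rwa [Int.gcd_comm])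
  have hk' := mem_Icc.1 hk
  intro h
  have := Int.le_of_dvd (by omega) (hcop.dvd_of_dvd_mul_right h)
  omega

theorem sawtooth_mul_div_of_gcd_eq_one (hab : Int.gcd a b = 1) (hk : k ∈ Icc 1 (b - 1)) :
    sawtooth (k * a / b) = (k * a % b : ℤ) / b - 1 / 2 := by
  have hb : b ≠ 0 := by have := mem_Icc.1 hk; omega
  exact_mod_cast sawtooth_intCast_div hb (not_dvd_mul_of_gcd_eq_one hab hk)

theorem sawtooth_div_of_mem_Icc (hk : k ∈ Icc 1 (b - 1)) : sawtooth (k / b) = k / b - 1 / 2 := by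
  have hkb : (k : ℤ) % b = k := Int.emod_eq_of_lt (by omega) (by have := mem_Icc.1 hk; omega)
  simpa [hkb] using sawtooth_mul_div_of_gcd_eq_one (a := 1) (by simp) hk

theorem two_mul_sq_mul_dedekindSum (hab : Int.gcd a b = 1) :
    2 * (b : ℝ) ^ 2 * dedekindSum a b
      = 2 * mulModSum a b - b * ∑ k ∈ Icc 1 (b - 1), (k : ℝ) := by
  calc 2 * (b : ℝ) ^ 2 * dedekindSum a b
      = ∑ k ∈ Icc 1 (b - 1), ((2 * k * ((k * a % b : ℤ) : ℝ) - b * k)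
          - b ^ 2 * sawtooth (k * a / b)) := by
        rw [dedekindSum, mul_sum]
        refine sum_congr rfl fun k hk => ?_
        have hb : (b : ℝ) ≠ 0 := Nat.cast_ne_zero.2 (by have := mem_Icc.1 hk; omega)
        rw [sawtooth_div_of_mem_Icc hk, sawtooth_mul_div_of_gcd_eq_one hab hk]
        field_simp
    _ = ∑ k ∈ Icc 1 (b - 1), (2 * k * ((k * a % b : ℤ) : ℝ) - b * k) := by
        rw [sum_sub_distrib, ← mul_sum, sum_sawtooth_mul_div_eq_zero, mul_zero, sub_zero]
    _ = 2 * mulModSum a b - b * ∑ k ∈ Icc 1 (b - 1), (k : ℝ) := by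
        rw [mulModSum, Int.cast_sum, mul_sum, mul_sum, ← sum_sub_distrib]
        exact sum_congr rfl fun k _ => by push_cast; ring

theorem odd_or_odd_of_gcd_eq_one (hab : Int.gcd a b = 1) : Odd b ∨ Odd a := by
  by_contra! h
  simp only [Nat.not_odd_iff_even, Int.not_odd_iff_even] at h
  have := Int.dvd_gcd h.2.two_dvd (Int.natCast_dvd_natCast.2 h.1.two_dvd)
  rw [hab] at this
  norm_num at this

theorem dvd_three_mul_mulModSum_add (hab : Int.gcd a b = 1) (hc : Odd c) :
    (b : ℤ) ∣ 3 * (mulModSum 1 b + c * mulModSum a b) := by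
  have hmod := ((mulModSum_modEq 1 b).add ((mulModSum_modEq a b).mul_left c)).mul_left 3
  rw [hmod.dvd_iff, show ∀ S : ℤ, 3 * (1 * S + c * (a * S)) = 3 * (1 + c * a) * S by intro; ring]
  refine dvd_three_mul_mul_sum_Icc_sq ((odd_or_odd_of_gcd_eq_one hab).imp_right fun ha => ?_)
  exact odd_one.add_odd (hc.mul ha)

end

theorem stmt15_general (b : ℕ) (a : ℤ) (ha : Int.gcd a (b : ℤ) = 1) :
    (∃ m : ℤ, 3 * (b : ℝ) * (dedekindSum 1 b - dedekindSum a b) = m) ∧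
    (∃ m : ℤ, 3 * (b : ℝ) * (dedekindSum 1 b + dedekindSum a b) = m) := by
  rcases Nat.eq_zero_or_pos b with rfl | hb
  · exact ⟨⟨0, by simp [dedekindSum]⟩, ⟨0, by simp [dedekindSum]⟩⟩
  have h2b : (2 * b : ℝ) ≠ 0 := by positivity
  have h1 := two_mul_sq_mul_dedekindSum (a := 1) (b := b) (by simp)
  have ha' := two_mul_sq_mul_dedekindSum ha
  obtain ⟨m, hm⟩ := dvd_three_mul_mulModSum_add ha (c := -1) odd_neg_one
  obtain ⟨n, hn⟩ := dvd_three_mul_mulModSum_add ha (c := 1) odd_one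
  replace hm := congrArg (Int.cast : ℤ → ℝ) hm
  replace hn := congrArg (Int.cast : ℤ → ℝ) hn
  push_cast at hm hn
  refine ⟨⟨m, ?_⟩, ⟨n - 3 * ∑ k ∈ Icc 1 (b - 1), (k : ℤ), ?_⟩⟩ <;> apply mul_left_cancel₀ h2b
  · linear_combination 3 * h1 - 3 * ha' + 2 * hm
  · push_cast
    linear_combination 3 * h1 + 3 * ha' + 2 * hn

/-- For `b = p^l` a prime power and `a` coprime to `b`, both `3b(s(1,b) - s(a,b))` and
`3b(s(1,b) + s(a,b))` are integers. -/
theorem stmt15 (p : ℕ) (hp : p.Prime) (l : ℕ) (hl : 0 < l) (b : ℕ) (hb : b = p ^ l)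
    (a : ℤ) (ha : Int.gcd a (b : ℤ) = 1) :
    (∃ m : ℤ, 3 * (b : ℝ) * (dedekindSum 1 b - dedekindSum a b) = m) ∧
    (∃ m : ℤ, 3 * (b : ℝ) * (dedekindSum 1 b + dedekindSum a b) = m) :=
  stmt15_general b a ha
end

section
/- Let b and r be positive integers and let R := ℤ[1/b][ζ_r] be the subring of ℂ generated by 1/b and ζ_r. If a ∈ R is such that a ∈ p·R for infinitely many rational primes p, then a = 0. -/
/-!
Since `ζ` is integral over `ℤ`, `ℤ[ζ]` is a free `ℤ`-module of finite rank, and every element of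
`ℤ[1/b, ζ]` lands in `ℤ[ζ]` after multiplication by a power of `b`. For a prime `p ∤ b`,
divisibility by `p` in `ℤ[1/b, ζ]` descends to divisibility in `ℤ[ζ]` through a Bézout relation
between `p` and a power of `b`. So some `b ^ n * a` is divisible in `ℤ[ζ]` by infinitely many
primes; each of its coordinates is then divisible by arbitrarily large integers, so it vanishes.
-/

theorem Module.Free.eq_zero_of_infinite_setOf_eq_nsmul {M : Type*} [AddCommGroup M]
    [Module.Free ℤ M] {z : M} (hz : {n : ℕ | ∃ w : M, z = n • w}.Infinite) : z = 0 := by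
  let B := Module.Free.chooseBasis ℤ M
  refine B.repr.injective (Finsupp.ext fun i => ?_)
  obtain ⟨n, ⟨w, hw⟩, hn⟩ := hz.exists_gt (B.repr z i).natAbs
  have hdvd : (n : ℤ) ∣ B.repr z i := ⟨B.repr w i, by simp [hw]⟩
  simpa using Int.eq_zero_of_dvd_of_natAbs_lt_natAbs hdvd (by simpa using hn)

theorem Subring.exists_pow_mul_mem_of_mem_closure_insert {K : Type*} [CommRing K]
    {A : Subring K} {b c : K} {s : Set K} (hb : b ∈ A) (hbc : b * c = 1) (hs : s ⊆ A)
    {x : K} (hx : x ∈ Subring.closure (insert c s)) : ∃ n : ℕ, b ^ n * x ∈ A := by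
  induction hx using Subring.closure_induction with
  | mem x hx =>
    rcases hx with rfl | hx
    · exact ⟨1, by simp [hbc]⟩
    · exact ⟨0, by simpa using hs hx⟩
  | zero => exact ⟨0, by simp⟩
  | one => exact ⟨0, by simp⟩
  | add x y _ _ hx hy =>
    obtain ⟨n, hn⟩ := hx
    obtain ⟨m, hm⟩ := hy
    refine ⟨n + m, ?_⟩
    rw [show b ^ (n + m) * (x + y) = b ^ m * (b ^ n * x) + b ^ n * (b ^ m * y) by ring]
    exact add_mem (mul_mem (pow_mem hb m) hn) (mul_mem (pow_mem hb n) hm)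
  | neg x _ hx =>
    obtain ⟨n, hn⟩ := hx
    exact ⟨n, by simpa [mul_neg] using neg_mem hn⟩
  | mul x y _ _ hx hy =>
    obtain ⟨n, hn⟩ := hx
    obtain ⟨m, hm⟩ := hy
    refine ⟨n + m, ?_⟩
    rw [show b ^ (n + m) * (x * y) = (b ^ n * x) * (b ^ m * y) by ring]
    exact mul_mem hn hm

theorem Subring.exists_mem_eq_mul_of_isCoprime {K : Type*} [CommRing K] {A : Subring K}
    {p m : ℤ} (hpm : IsCoprime p m) {x z : K} (hz : z ∈ A) (hmx : (m : K) * x ∈ A)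
    (hzx : z = p * x) : ∃ w ∈ A, z = p * w := by
  obtain ⟨u, v, huv⟩ := hpm
  have huvK : (u : K) * p + v * m = 1 := by exact_mod_cast congrArg (Int.cast : ℤ → K) huv
  refine ⟨u * z + v * (m * x), add_mem (mul_mem (intCast_mem A u) hz)
    (mul_mem (intCast_mem A v) hmx), ?_⟩
  linear_combination (-z) * huvK + (v * m) * hzx

/-- Let `R = ℤ[1/b][ζ_r]` be the subring of `ℂ` generated by `1/b` and `ζ_r`.  If `a ∈ R`
is divisible in `R` by infinitely many rational primes, then `a = 0`. -/
theorem stmt16 (b r : ℕ) (hb : 0 < b) (hr : 0 < r)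
    (ζ : ℂ) (hζ : ζ = Complex.exp (2 * Real.pi * Complex.I / r))
    (R : Subring ℂ) (hR : R = Subring.closure {((b : ℂ))⁻¹, ζ})
    (a : ℂ) (ha : a ∈ R)
    (h : {p : ℕ | p.Prime ∧ ∃ x ∈ R, a = (p : ℂ) * x}.Infinite) :
    a = 0 := by
  have hbC : (b : ℂ) ≠ 0 := by exact_mod_cast hb.ne'
  have hζ_int : IsIntegral ℤ ζ := hζ ▸ (Complex.isPrimitiveRoot_exp r hr.ne').isIntegral hr
  set A := Algebra.adjoin ℤ ({ζ} : Set ℂ)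
  have : Module.Finite ℤ A := Module.Finite.iff_fg.mpr hζ_int.fg_adjoin_singleton
  have hRA : ∀ x ∈ R, ∃ n : ℕ, (b : ℂ) ^ n * x ∈ A := fun x hx => by
    subst hR
    exact Subring.exists_pow_mul_mem_of_mem_closure_insert (A := A.toSubring)
      (natCast_mem A b) (mul_inv_cancel₀ hbC)
      (Set.singleton_subset_iff.mpr (Algebra.self_mem_adjoin_singleton ℤ ζ)) hx
  obtain ⟨n, hn⟩ := hRA a ha
  have hdiv : {p : ℕ | p.Prime ∧ ∃ x ∈ R, a = p * x} \ {p | p ∣ b} ⊆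
      {p : ℕ | ∃ w : A, (⟨_, hn⟩ : A) = p • w} := by
    rintro p ⟨⟨hp, x, hxR, rfl⟩, hpb⟩
    obtain ⟨m, hm⟩ := hRA x hxR
    have hcop := (((Nat.Prime.coprime_iff_not_dvd hp).mpr hpb).pow_right m).isCoprime
    obtain ⟨w, hwA, hw⟩ := Subring.exists_mem_eq_mul_of_isCoprime (A := A.toSubring) hcop
      (x := b ^ n * x) hn (by simpa [mul_left_comm] using mul_mem (pow_mem (natCast_mem A b) n) hm)
      (by push_cast; ring)
    exact ⟨⟨w, hwA⟩, Subtype.ext (by simpa using hw)⟩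
  have hfin : {p : ℕ | p ∣ b}.Finite :=
    (Set.finite_Iic b).subset fun p hp => Nat.le_of_dvd hb hp
  have hz := Module.Free.eq_zero_of_infinite_setOf_eq_nsmul ((h.sdiff hfin).mono hdiv)
  simpa [hbC] using congrArg Subtype.val hz
end

section
/- Let r be an odd positive integer and let p be an odd prime not dividing r. Define f_p(X) := Σ_{i=0}^{p−1} ζ_r^{p−1−i}·X^i ∈ ℤ[ζ_r][X] (so that (X − ζ_r)·f_p(X) = X^p − ζ_r^p). Then the evaluation homomorphism ℤ[ζ_r][X] → ℤ[ζ_{pr}] sending X to ζ_p·ζ_r is surjective with kernel the ideal generated by f_p(X), and hence induces a ring isomorphism ℤ[ζ_r][X]/(f_p(X)) ≅ ℤ[ζ_{pr}]. -/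
/-!
`α = ζ_p ζ_r` is a primitive `pr`-th root of unity, so `ℤ[ζ_r][α] = ℤ[α] = ℤ[ζ_{pr}]`.
The polynomial `f_p` is monic of degree `p - 1` and vanishes at `α`, since
`(α - ζ_r) f_p(α) = α^p - ζ_r^p = 0`. Comparing `[ℚ(ζ_{pr}) : ℚ] = φ(pr) = (p - 1) φ(r)` with
`[ℚ(ζ_r) : ℚ] = φ(r)` shows that `f_p` is the minimal polynomial of `α` over `ℚ(ζ_r)`, and
because `f_p` is monic, divisibility by it in `ℚ(ζ_r)[X]` descends to `ℤ[ζ_r][X]`.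
-/

open Polynomial IntermediateField

theorem IsPrimitiveRoot.mul_of_coprime {M : Type*} [CommMonoid M] {ζ ξ : M} {k l : ℕ}
    (hζ : IsPrimitiveRoot ζ k) (hξ : IsPrimitiveRoot ξ l) (hkl : k.Coprime l) :
    IsPrimitiveRoot (ζ * ξ) (k * l) := by
  rw [hζ.eq_orderOf, hξ.eq_orderOf] at hkl ⊢
  rw [← (Commute.all ζ ξ).orderOf_mul_eq_mul_orderOf_of_coprime hkl]
  exact IsPrimitiveRoot.orderOf _

theorem IsPrimitiveRoot.exists_pow_eq_of_pow_eq_one {R : Type*} [CommRing R] [IsDomain R]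
    {ζ ξ : R} {n : ℕ} (hζ : IsPrimitiveRoot ζ n) (hn : n ≠ 0) (hξ : ξ ^ n = 1) :
    ∃ i, ζ ^ i = ξ := by
  have : NeZero n := ⟨hn⟩
  obtain ⟨i, -, hi⟩ := hζ.eq_pow_of_pow_eq_one hξ
  exact ⟨i, hi⟩

theorem IsPrimitiveRoot.mem_adjoin_of_pow_eq_one {R S : Type*} [CommRing R] [CommRing S]
    [IsDomain S] [Algebra R S] {ζ ξ : S} {n : ℕ} (hζ : IsPrimitiveRoot ζ n) (hn : n ≠ 0)
    (hξ : ξ ^ n = 1) : ξ ∈ Algebra.adjoin R {ζ} := by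
  obtain ⟨i, rfl⟩ := hζ.exists_pow_eq_of_pow_eq_one hn hξ
  exact pow_mem (Algebra.self_mem_adjoin_singleton R ζ) i

theorem IsPrimitiveRoot.mem_adjoin_simple_of_pow_eq_one {F E : Type*} [Field F] [Field E]
    [Algebra F E] {ζ ξ : E} {n : ℕ} (hζ : IsPrimitiveRoot ζ n) (hn : n ≠ 0)
    (hξ : ξ ^ n = 1) : ξ ∈ F⟮ζ⟯ := by
  obtain ⟨i, rfl⟩ := hζ.exists_pow_eq_of_pow_eq_one hn hξ
  exact pow_mem (mem_adjoin_simple_self F ζ) i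

theorem IsPrimitiveRoot.adjoin_insert_eq_adjoin {R S : Type*} [CommRing R] [CommRing S]
    [IsDomain S] [Algebra R S] {ζ ξ η : S} {n : ℕ} (hζ : IsPrimitiveRoot ζ n)
    (hξ : IsPrimitiveRoot ξ n) (hn : n ≠ 0) (hη : η ^ n = 1) :
    Algebra.adjoin R {ζ, η} = Algebra.adjoin R {ξ} := by
  apply le_antisymm
  · rw [Algebra.adjoin_le_iff, Set.insert_subset_iff, Set.singleton_subset_iff]
    exact ⟨hξ.mem_adjoin_of_pow_eq_one hn hζ.pow_eq_one, hξ.mem_adjoin_of_pow_eq_one hn hη⟩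
  · rw [Algebra.adjoin_le_iff, Set.singleton_subset_iff]
    exact Algebra.adjoin_mono (Set.singleton_subset_iff.2 (Set.mem_insert ζ {η}))
      (hζ.mem_adjoin_of_pow_eq_one hn hξ.pow_eq_one)

theorem IsPrimitiveRoot.finrank_adjoin_rat {L : Type*} [Field L] [CharZero L] {ζ : L} {n : ℕ}
    (hζ : IsPrimitiveRoot ζ n) (hn : n ≠ 0) : Module.finrank ℚ ℚ⟮ζ⟯ = n.totient := by
  have hpos := Nat.pos_of_ne_zero hn
  rw [adjoin.finrank (hζ.isIntegral hpos).tower_top, ← cyclotomic_eq_minpoly_rat hζ hpos,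
    natDegree_cyclotomic]

theorem IsPrimitiveRoot.natDegree_minpoly_mul_totient {L : Type*} [Field L] [CharZero L]
    {ζ ξ : L} {m n : ℕ} (hζ : IsPrimitiveRoot ζ n) (hξ : IsPrimitiveRoot ξ m) (hn : n ≠ 0)
    (hm : m ≠ 0) (hmn : m ∣ n) : (minpoly ℚ⟮ξ⟯ ζ).natDegree * m.totient = n.totient := by
  have hξζ : ξ ∈ ℚ⟮ζ⟯ := hζ.mem_adjoin_simple_of_pow_eq_one hn
    ((hξ.pow_eq_one_iff_dvd n).2 hmn)
  have htower : restrictScalars ℚ ℚ⟮ξ⟯⟮ζ⟯ = ℚ⟮ζ⟯ := by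
    refine (adjoin_simple_adjoin_simple ℚ ξ ζ).trans ?_
    refine le_antisymm ?_ (adjoin_simple_le_iff.2 (subset_adjoin ℚ _ (by simp)))
    rw [adjoin_le_iff, Set.insert_subset_iff, Set.singleton_subset_iff]
    exact ⟨hξζ, mem_adjoin_simple_self ℚ ζ⟩
  rw [← adjoin.finrank (hζ.isIntegral (Nat.pos_of_ne_zero hn)).tower_top,
    ← hξ.finrank_adjoin_rat hm, ← hζ.finrank_adjoin_rat hn, ← htower, mul_comm]
  exact Module.finrank_mul_finrank ℚ ℚ⟮ξ⟯ ℚ⟮ξ⟯⟮ζ⟯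

theorem IsPrimitiveRoot.natDegree_minpoly_of_prime_mul {L : Type*} [Field L] [CharZero L]
    {ζ ξ : L} {p r : ℕ} (hζ : IsPrimitiveRoot ζ (p * r)) (hξ : IsPrimitiveRoot ξ r)
    (hp : p.Prime) (hr : r ≠ 0) (hpr : p.Coprime r) : (minpoly ℚ⟮ξ⟯ ζ).natDegree = p - 1 := by
  have h := hζ.natDegree_minpoly_mul_totient hξ (mul_ne_zero hp.ne_zero hr) hr (dvd_mul_left r p)
  rw [Nat.totient_mul hpr, Nat.totient_prime hp] at h
  exact Nat.eq_of_mul_eq_mul_right (Nat.totient_pos.2 (Nat.pos_of_ne_zero hr)) h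

theorem ker_eval₂RingHom_eq_span_of_monic {A K L : Type*} [CommRing A] [Field K] [CommRing L]
    [Algebra K L] {i : A →+* K} (hi : Function.Injective i) {x : L} {f : A[X]} (hf : f.Monic)
    (hfx : f.eval₂ ((algebraMap K L).comp i) x = 0)
    (hdeg : f.natDegree ≤ (minpoly K x).natDegree) :
    RingHom.ker (eval₂RingHom ((algebraMap K L).comp i) x) = Ideal.span {f} := by
  have aeval_map (g : A[X]) : aeval x (g.map i) = g.eval₂ ((algebraMap K L).comp i) x := by
    rw [aeval_def, eval₂_map]
  have hfK : aeval x (f.map i) = 0 := by rw [aeval_map, hfx]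
  have hmin : f.map i = minpoly K x := by
    have hint : IsIntegral K x := ⟨f.map i, hf.map i, by rwa [aeval_def] at hfK⟩
    refine eq_of_monic_of_dvd_of_natDegree_le (minpoly.monic hint) (hf.map i)
      (minpoly.dvd K x hfK) ?_
    rwa [natDegree_map_eq_of_injective hi]
  ext g
  rw [RingHom.mem_ker, Ideal.mem_span_singleton, coe_eval₂RingHom, ← map_dvd_map i hi hf, hmin,
    ← aeval_map]
  exact minpoly.dvd_iff.symm

theorem range_eval₂RingHom_adjoin_val {R S : Type*} [CommRing R] [CommRing S] [Algebra R S]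
    (s : Set S) (x : S) :
    RingHom.range (eval₂RingHom (Algebra.adjoin R s).val.toRingHom x) =
      (Algebra.adjoin R (insert x s)).toSubring := by
  rw [Set.insert_eq, Set.union_comm, Algebra.adjoin_union_eq_adjoin_adjoin,
    Algebra.adjoin_singleton_eq_range_aeval]
  rfl

theorem X_sub_C_mul_sum_C_pow_mul_X_pow {R : Type*} [CommRing R] (y : R) (n : ℕ) :
    (X - C y) * ∑ i ∈ Finset.range n, C (y ^ (n - 1 - i)) * X ^ i = X ^ n - C y ^ n := by
  rw [mul_comm, ← geom_sum₂_mul]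
  congr 1
  refine Finset.sum_congr rfl fun i _ => ?_
  rw [map_pow, mul_comm]

theorem monic_sum_C_pow_mul_X_pow {R : Type*} [CommRing R] (y : R) {n : ℕ} (hn : n ≠ 0) :
    (∑ i ∈ Finset.range n, C (y ^ (n - 1 - i)) * X ^ i).Monic := by
  refine (monic_X_sub_C y).of_mul_monic_left ?_
  rw [X_sub_C_mul_sum_C_pow_mul_X_pow, ← map_pow]
  exact monic_X_pow_sub_C _ hn

theorem natDegree_sum_C_pow_mul_X_pow {R : Type*} [CommRing R] [Nontrivial R] (y : R) {n : ℕ}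
    (hn : n ≠ 0) :
    (∑ i ∈ Finset.range n, C (y ^ (n - 1 - i)) * X ^ i).natDegree = n - 1 := by
  have h := congrArg natDegree (X_sub_C_mul_sum_C_pow_mul_X_pow y n)
  rw [(monic_X_sub_C y).natDegree_mul (monic_sum_C_pow_mul_X_pow y hn), natDegree_X_sub_C,
    ← map_pow, natDegree_X_pow_sub_C] at h
  omega

theorem eval₂_sum_C_pow_mul_X_pow_eq_zero {R L : Type*} [CommRing R] [CommRing L] [IsDomain L]
    (φ : R →+* L) (y : R) {x : L} {n : ℕ} (hpow : x ^ n = φ y ^ n) (hne : x ≠ φ y) :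
    (∑ i ∈ Finset.range n, C (y ^ (n - 1 - i)) * X ^ i).eval₂ φ x = 0 := by
  have h := congrArg (eval₂ φ x) (X_sub_C_mul_sum_C_pow_mul_X_pow y n)
  rw [eval₂_mul, eval₂_sub, eval₂_X, eval₂_C, eval₂_sub, eval₂_X_pow, eval₂_pow, eval₂_C,
    hpow, sub_self] at h
  exact (mul_eq_zero.1 h).resolve_left (sub_ne_zero.2 hne)

theorem stmt17_general (r p : ℕ) (hp : p.Prime) (hpr : ¬ p ∣ r) (ζr ζp ζpr : ℂ)
    (h1 : ζr = Complex.exp (2 * Real.pi * Complex.I / r))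
    (h2 : ζp = Complex.exp (2 * Real.pi * Complex.I / p))
    (h3 : ζpr = Complex.exp (2 * Real.pi * Complex.I / (p * r)))
    (z : Algebra.adjoin ℤ {ζr}) (hz : (z : ℂ) = ζr) :
    RingHom.range (Polynomial.eval₂RingHom ((Algebra.adjoin ℤ {ζr}).val.toRingHom) (ζp * ζr)) =
        (Algebra.adjoin ℤ {ζpr}).toSubring ∧
    RingHom.ker (Polynomial.eval₂RingHom ((Algebra.adjoin ℤ {ζr}).val.toRingHom) (ζp * ζr)) =
        Ideal.span {∑ i ∈ Finset.range p, Polynomial.C (z ^ (p - 1 - i)) * Polynomial.X ^ i} ∧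
    Nonempty
      ((Polynomial (Algebra.adjoin ℤ {ζr}) ⧸
          Ideal.span {∑ i ∈ Finset.range p, Polynomial.C (z ^ (p - 1 - i)) * Polynomial.X ^ i})
        ≃+* (Algebra.adjoin ℤ {ζpr})) := by
  have hr : r ≠ 0 := by rintro rfl; exact hpr (dvd_zero p)
  have hpr0 : p * r ≠ 0 := mul_ne_zero hp.ne_zero hr
  have hζr : IsPrimitiveRoot ζr r := h1 ▸ Complex.isPrimitiveRoot_exp r hr
  have hζp : IsPrimitiveRoot ζp p := h2 ▸ Complex.isPrimitiveRoot_exp p hp.ne_zero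
  have hζpr : IsPrimitiveRoot ζpr (p * r) := by
    simpa [h3] using Complex.isPrimitiveRoot_exp (p * r) hpr0
  have hcop : p.Coprime r := (Nat.Prime.coprime_iff_not_dvd hp).2 hpr
  have hα : IsPrimitiveRoot (ζp * ζr) (p * r) := hζp.mul_of_coprime hζr hcop
  have hrange : RingHom.range (eval₂RingHom (Algebra.adjoin ℤ {ζr}).val.toRingHom (ζp * ζr)) =
      (Algebra.adjoin ℤ {ζpr}).toSubring := by
    rw [range_eval₂RingHom_adjoin_val, hα.adjoin_insert_eq_adjoin hζpr hpr0
      ((hζr.pow_eq_one_iff_dvd _).2 (dvd_mul_left r p))]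
  have hAK : (Algebra.adjoin ℤ {ζr}).toSubring ≤ ℚ⟮ζr⟯.toSubring := by
    rw [Algebra.adjoin_int]
    exact Subring.closure_le.2 (Set.singleton_subset_iff.2 (mem_adjoin_simple_self ℚ ζr))
  have hfα : (∑ i ∈ Finset.range p, C (z ^ (p - 1 - i)) * X ^ i).eval₂
      (Algebra.adjoin ℤ {ζr}).val.toRingHom (ζp * ζr) = 0 := by
    have hzr : (Algebra.adjoin ℤ {ζr}).val.toRingHom z = ζr := hz
    refine eval₂_sum_C_pow_mul_X_pow_eq_zero _ z ?_ ?_ <;> rw [hzr]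
    · rw [mul_pow, hζp.pow_eq_one, one_mul]
    · intro h
      exact hζp.ne_one hp.one_lt (mul_right_cancel₀ (hζr.ne_zero hr) (h.trans (one_mul ζr).symm))
  have hker := ker_eval₂RingHom_eq_span_of_monic (K := ℚ⟮ζr⟯) (L := ℂ)
    (i := Subring.inclusion hAK) (Subring.inclusion_injective hAK)
    (monic_sum_C_pow_mul_X_pow z hp.ne_zero) hfα
    (by rw [natDegree_sum_C_pow_mul_X_pow z hp.ne_zero,
      hα.natDegree_minpoly_of_prime_mul hζr hp hr hcop])
  exact ⟨hrange, hker, ⟨(Ideal.quotEquivOfEq hker.symm).trans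
    ((RingHom.quotientKerEquivRange _).trans (RingEquiv.subringCongr hrange))⟩⟩

/-- Let `r` be odd and `p` an odd prime not dividing `r`, and let
`f_p(X) = ∑_{i=0}^{p-1} ζ_r^{p-1-i} X^i ∈ ℤ[ζ_r][X]`.  The evaluation homomorphism
`ℤ[ζ_r][X] → ℂ`, `X ↦ ζ_p·ζ_r`, has image `ℤ[ζ_{pr}]` and kernel the ideal generated by
`f_p(X)`; hence it induces a ring isomorphism `ℤ[ζ_r][X]/(f_p(X)) ≅ ℤ[ζ_{pr}]`. -/
theorem stmt17 (r p : ℕ) (hrpos : 0 < r) (hrodd : Odd r) (hp : p.Prime) (hpodd : Odd p)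
    (hpr : ¬ p ∣ r) (ζr ζp ζpr : ℂ)
    (h1 : ζr = Complex.exp (2 * Real.pi * Complex.I / r))
    (h2 : ζp = Complex.exp (2 * Real.pi * Complex.I / p))
    (h3 : ζpr = Complex.exp (2 * Real.pi * Complex.I / (p * r)))
    (z : Algebra.adjoin ℤ {ζr}) (hz : (z : ℂ) = ζr) :
    RingHom.range (Polynomial.eval₂RingHom ((Algebra.adjoin ℤ {ζr}).val.toRingHom) (ζp * ζr)) =
        (Algebra.adjoin ℤ {ζpr}).toSubring ∧
    RingHom.ker (Polynomial.eval₂RingHom ((Algebra.adjoin ℤ {ζr}).val.toRingHom) (ζp * ζr)) =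
        Ideal.span {∑ i ∈ Finset.range p, Polynomial.C (z ^ (p - 1 - i)) * Polynomial.X ^ i} ∧
    Nonempty
      ((Polynomial (Algebra.adjoin ℤ {ζr}) ⧸
          Ideal.span {∑ i ∈ Finset.range p, Polynomial.C (z ^ (p - 1 - i)) * Polynomial.X ^ i})
        ≃+* (Algebra.adjoin ℤ {ζpr})) :=
  stmt17_general r p hp hpr ζr ζp ζpr h1 h2 h3 z hz
end

section
/- In the field ℚ(u) of rational functions in one variable u, set q := u⁴, {m} := u^{2m} − u^{−2m} for integers m, {m}! := ∏_{i=1}^{m} {i}, and qbinom(m, j) := {m}!/({j}!·{m−j}!) for 0 ≤ j ≤ m, with the convention qbinom(m, j) := 0 when j < 0 or j > m. Then for all integers k ≥ 0 and 1 ≤ j ≤ k+1, the following identity holds in ℚ(u): qbinom(2k+1, k+j) + qbinom(2k+1, k−j) = ({k+1}/{2k+2})·qbinom(2k+2, k+j+1)·(u^{2j} + u^{−2j}). -/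
/-- The generator `u` of the rational function field `ℚ(u)`. -/
noncomputable def u : RatFunc ℚ := RatFunc.X

/-- `{m} = u^{2m} - u^{-2m}`. -/
noncomputable def qbr (m : ℤ) : RatFunc ℚ := u ^ (2 * m) - u ^ (-(2 * m))

/-- `{m}! = ∏_{i=1}^m {i}`. -/
noncomputable def qfac (m : ℕ) : RatFunc ℚ := ∏ i ∈ Finset.range m, qbr ((i : ℤ) + 1)

/-- The balanced quantum binomial `qbinom m j = {m}!/({j}!·{m-j}!)` for `0 ≤ j ≤ m`,
with the convention that it vanishes for `j < 0` or `j > m`. -/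
noncomputable def qbinom (m : ℕ) (j : ℤ) : RatFunc ℚ :=
  if 0 ≤ j ∧ j ≤ (m : ℤ) then qfac m / (qfac j.toNat * qfac (m - j.toNat)) else 0

/-!
Write `[n, i]` for `qbinom n i`. The factorial formula gives `[n, i - 1] {n+1} = [n+1, i] {i}`,
and with the symmetry `[n, i] = [n, n - i]` also `[n, i] {n+1} = [n+1, i] {n+1-i}`; because of the
vanishing convention and `{0} = 0` both hold for every integer `i`. Adding them yields
`[n, i - 1] + [n, i] = [n+1, i] ({i} + {n+1-i}) / {n+1}`. Take `n = 2k+1`, `i = k+j+1`: by symmetry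
`[2k+1, k-j] = [2k+1, k+j+1]`, and `{k+1+j} + {k+1-j} = {k+1} (u^{2j} + u^{-2j})`.
-/

open RatFunc

lemma RatFunc.intDegree_X_zpow {K : Type*} [Field K] (z : ℤ) :
    intDegree ((X : RatFunc K) ^ z) = z := by
  induction z using Int.induction_on with
  | zero => simp
  | succ n ih =>
    rw [zpow_add_one₀ X_ne_zero, intDegree_mul (zpow_ne_zero _ X_ne_zero) X_ne_zero, ih,
      intDegree_X]
  | pred n ih =>
    rw [zpow_sub_one₀ X_ne_zero, intDegree_mul (zpow_ne_zero _ X_ne_zero) (inv_ne_zero X_ne_zero),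
      ih, intDegree_inv, intDegree_X, sub_eq_add_neg]

lemma qbr_zero : qbr 0 = 0 := by simp [qbr]

lemma qbr_ne_zero {m : ℤ} (hm : m ≠ 0) : qbr m ≠ 0 := by
  intro h
  have := congrArg intDegree (sub_eq_zero.mp h)
  simp only [u, intDegree_X_zpow] at this
  omega

lemma qbr_add_add_qbr_sub (a b : ℤ) :
    qbr (a + b) + qbr (a - b) = qbr a * (u ^ (2 * b) + u ^ (-(2 * b))) := by
  have hu : u ≠ 0 := X_ne_zero
  simp only [qbr, mul_add, mul_neg, neg_add, neg_neg, sub_eq_add_neg, zpow_add₀ hu]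
  ring

lemma qfac_succ (m : ℕ) : qfac (m + 1) = qfac m * qbr ((m : ℤ) + 1) :=
  Finset.prod_range_succ _ _

lemma qfac_ne_zero (m : ℕ) : qfac m ≠ 0 :=
  Finset.prod_ne_zero_iff.mpr fun _ _ => qbr_ne_zero (by omega)

lemma qbinom_of_le {n t : ℕ} (h : t ≤ n) : qbinom n t = qfac n / (qfac t * qfac (n - t)) := by
  rw [qbinom, if_pos ⟨by omega, by omega⟩, Int.toNat_natCast]

lemma qbinom_eq_zero {n : ℕ} {i : ℤ} (h : ¬(0 ≤ i ∧ i ≤ n)) : qbinom n i = 0 :=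
  if_neg h

lemma qbinom_symm (n : ℕ) (i : ℤ) : qbinom n (n - i) = qbinom n i := by
  by_cases h : 0 ≤ i ∧ i ≤ n
  · obtain ⟨t, rfl⟩ := Int.eq_ofNat_of_zero_le h.1
    have ht : t ≤ n := by omega
    rw [show (n : ℤ) - t = ((n - t : ℕ) : ℤ) by omega, qbinom_of_le ht,
      qbinom_of_le (Nat.sub_le n t), Nat.sub_sub_self ht, mul_comm]
  · rw [qbinom_eq_zero h, qbinom_eq_zero (by omega)]

lemma qbinom_sub_one_mul_qbr (n : ℕ) (i : ℤ) :
    qbinom n (i - 1) * qbr ((n : ℤ) + 1) = qbinom (n + 1) i * qbr i := by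
  by_cases h : 1 ≤ i ∧ i ≤ n + 1
  · obtain ⟨t, rfl⟩ : ∃ t : ℕ, i = t + 1 := ⟨(i - 1).toNat, by omega⟩
    have ht : t ≤ n := by omega
    rw [add_sub_cancel_right, qbinom_of_le ht, ← Nat.cast_add_one t,
      qbinom_of_le (Nat.succ_le_succ ht), Nat.succ_sub_succ, qfac_succ, qfac_succ]
    have := qfac_ne_zero t
    have := qfac_ne_zero (n - t)
    have : qbr ((t : ℤ) + 1) ≠ 0 := qbr_ne_zero (by omega)
    push_cast
    field_simp
  · obtain rfl | hi : i = 0 ∨ ¬(0 ≤ i ∧ i ≤ ((n + 1 : ℕ) : ℤ)) := by omega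
    · rw [qbr_zero, mul_zero, qbinom_eq_zero (by omega), zero_mul]
    · rw [qbinom_eq_zero (by omega), qbinom_eq_zero hi, zero_mul, zero_mul]

lemma qbinom_mul_qbr (n : ℕ) (i : ℤ) :
    qbinom n i * qbr ((n : ℤ) + 1) = qbinom (n + 1) i * qbr ((n : ℤ) + 1 - i) := by
  have := qbinom_sub_one_mul_qbr n ((n : ℤ) + 1 - i)
  rwa [show (n : ℤ) + 1 - i - 1 = n - i by ring, qbinom_symm, ← qbinom_symm (n + 1),
    show (((n + 1 : ℕ) : ℤ)) - ((n : ℤ) + 1 - i) = i by push_cast; ring] at this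

lemma qbinom_sub_one_add_qbinom (n : ℕ) (i : ℤ) :
    qbinom n (i - 1) + qbinom n i =
      qbinom (n + 1) i * (qbr i + qbr ((n : ℤ) + 1 - i)) / qbr ((n : ℤ) + 1) := by
  rw [eq_div_iff (qbr_ne_zero (by omega)), add_mul, qbinom_sub_one_mul_qbr, qbinom_mul_qbr]
  ring

theorem stmt19_general (k j : ℕ) :
    qbinom (2 * k + 1) ((k : ℤ) + j) + qbinom (2 * k + 1) ((k : ℤ) - j) =
      qbr ((k : ℤ) + 1) / qbr (2 * (k : ℤ) + 2) * qbinom (2 * k + 2) ((k : ℤ) + j + 1) *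
        (u ^ (2 * (j : ℤ)) + u ^ (-(2 * (j : ℤ)))) := by
  have hsymm : qbinom (2 * k + 1) ((k : ℤ) - j) = qbinom (2 * k + 1) ((k : ℤ) + j + 1) := by
    rw [← qbinom_symm]; congr 1; push_cast; ring
  have hpascal := qbinom_sub_one_add_qbinom (2 * k + 1) ((k : ℤ) + j + 1)
  have hnum : qbr ((k : ℤ) + j + 1) + qbr (((2 * k + 1 : ℕ) : ℤ) + 1 - ((k : ℤ) + j + 1)) =
      qbr ((k : ℤ) + 1) * (u ^ (2 * (j : ℤ)) + u ^ (-(2 * (j : ℤ)))) := by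
    rw [← qbr_add_add_qbr_sub]; congr 2 <;> push_cast <;> ring
  rw [add_sub_cancel_right, ← hsymm, hnum,
    show ((2 * k + 1 : ℕ) : ℤ) + 1 = 2 * k + 2 by push_cast; ring] at hpascal
  rw [hpascal]
  ring

/-- For `k ≥ 0` and `1 ≤ j ≤ k+1`, in `ℚ(u)`:
`qbinom(2k+1, k+j) + qbinom(2k+1, k-j)
  = ({k+1}/{2k+2})·qbinom(2k+2, k+j+1)·(u^{2j} + u^{-2j})`. -/
theorem stmt19 (k j : ℕ) (hj1 : 1 ≤ j) (hj2 : j ≤ k + 1) :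
    qbinom (2 * k + 1) ((k : ℤ) + j) + qbinom (2 * k + 1) ((k : ℤ) - j) =
      qbr ((k : ℤ) + 1) / qbr (2 * (k : ℤ) + 2) * qbinom (2 * k + 2) ((k : ℤ) + j + 1) *
        (u ^ (2 * (j : ℤ)) + u ^ (-(2 * (j : ℤ)))) :=
  stmt19_general k j
end
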